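/- arXiv:2110.12559 — 13 statements merged into one kernel-verified Lean document; each statement's English description precedes it below -/
import Mathlib

section
/- For all real θ₁ ≤ θ₂, the sum of the areas of the two opposite sectors cut off by the rays at angles θ₁, θ₂ and their opposite rays satisfies S(θ₁, θ₂) + S(θ₁+π, θ₂+π) = a²·(θ₂ − θ₁) + r₀²·sin(θ₂ − θ₁)·cos(θ₁ + θ₂ − 2θ₀). -/
open Real

/-- For all real θ₁ ≤ θ₂, the sum of the areas of the two opposite sectors cut off by the
rays at angles θ₁, θ₂ and their opposite rays satisfies
S(θ₁,θ₂) + S(θ₁+π, θ₂+π) = a²·(θ₂ − θ₁) + r₀²·sin(θ₂ − θ₁)·cos(θ₁ + θ₂ − 2θ₀). -/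
theorem opposite_sector_area_sum (a r₀ θ₀ : ℝ) (ha : 0 < a) (hr₀ : 0 ≤ r₀) (hr₀a : r₀ ≤ a)
    (S : ℝ → ℝ → ℝ)
    (hS : ∀ α β : ℝ, α ≤ β → S α β = (1 / 2) * ∫ θ in α..β,
      (r₀ * Real.cos (θ - θ₀) + Real.sqrt (a ^ 2 - r₀ ^ 2 * Real.sin (θ - θ₀) ^ 2)) ^ 2) :
    ∀ θ₁ θ₂ : ℝ, θ₁ ≤ θ₂ →
      S θ₁ θ₂ + S (θ₁ + π) (θ₂ + π) =
        a ^ 2 * (θ₂ - θ₁) + r₀ ^ 2 * Real.sin (θ₂ - θ₁) * Real.cos (θ₁ + θ₂ - 2 * θ₀) := by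
  intro θ₁ θ₂ h12
  set g : ℝ → ℝ := fun θ =>
    (r₀ * Real.cos (θ - θ₀) + Real.sqrt (a ^ 2 - r₀ ^ 2 * Real.sin (θ - θ₀) ^ 2)) ^ 2 with hg
  have hgc : Continuous g := by
    apply Continuous.pow
    apply Continuous.add
    · exact continuous_const.mul (Real.continuous_cos.comp (continuous_id.sub continuous_const))
    · exact Real.continuous_sqrt.comp (continuous_const.sub (continuous_const.mul
        ((Real.continuous_sin.comp (continuous_id.sub continuous_const)).pow 2)))
  have hS1 := hS θ₁ θ₂ h12
  have hS2 := hS (θ₁ + π) (θ₂ + π) (by linarith)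
  have hshift : (∫ θ in (θ₁ + π)..(θ₂ + π), g θ) = ∫ θ in θ₁..θ₂, g (θ + π) := by
    rw [← intervalIntegral.integral_comp_add_right g π]
  -- pointwise identity
  have hpt : ∀ θ : ℝ, g θ + g (θ + π) = 2 * a ^ 2 + 2 * r₀ ^ 2 * Real.cos (2 * (θ - θ₀)) := by
    intro θ
    have h1 : Real.cos (θ + π - θ₀) = -Real.cos (θ - θ₀) := by
      rw [show θ + π - θ₀ = (θ - θ₀) + π by ring, Real.cos_add_pi]
    have h2 : Real.sin (θ + π - θ₀) ^ 2 = Real.sin (θ - θ₀) ^ 2 := by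
      rw [show θ + π - θ₀ = (θ - θ₀) + π by ring, Real.sin_add_pi]
      ring
    have hnn : 0 ≤ a ^ 2 - r₀ ^ 2 * Real.sin (θ - θ₀) ^ 2 := by
      have : r₀ ^ 2 * Real.sin (θ - θ₀) ^ 2 ≤ a ^ 2 * 1 := by
        apply mul_le_mul (by nlinarith) (by nlinarith [Real.sin_sq_le_one (θ - θ₀)])
          (sq_nonneg _) (by positivity)
      linarith
    have hsq : Real.sqrt (a ^ 2 - r₀ ^ 2 * Real.sin (θ - θ₀) ^ 2) ^ 2
        = a ^ 2 - r₀ ^ 2 * Real.sin (θ - θ₀) ^ 2 := Real.sq_sqrt hnn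
    have hc2 : Real.cos (2 * (θ - θ₀)) = 2 * Real.cos (θ - θ₀) ^ 2 - 1 :=
      Real.cos_two_mul _
    have hpyth := Real.sin_sq_add_cos_sq (θ - θ₀)
    simp only [hg, h1, h2, hc2]
    nlinarith [hsq, hpyth]
  -- integral of the rhs
  have hI : (∫ θ in θ₁..θ₂, (2 * a ^ 2 + 2 * r₀ ^ 2 * Real.cos (2 * (θ - θ₀)))) =
      (2 * a ^ 2 * θ₂ + r₀ ^ 2 * Real.sin (2 * (θ₂ - θ₀)))
        - (2 * a ^ 2 * θ₁ + r₀ ^ 2 * Real.sin (2 * (θ₁ - θ₀))) := by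
    apply intervalIntegral.integral_eq_sub_of_hasDerivAt
    · intro x hx
      have h1 : HasDerivAt (fun θ : ℝ => 2 * a ^ 2 * θ) (2 * a ^ 2) x := by
        simpa using (hasDerivAt_id x).const_mul (2 * a ^ 2)
      have h2 : HasDerivAt (fun θ : ℝ => Real.sin (2 * (θ - θ₀)))
          (Real.cos (2 * (x - θ₀)) * 2) x := by
        have hinner : HasDerivAt (fun θ : ℝ => 2 * (θ - θ₀)) 2 x := by
          simpa using (((hasDerivAt_id x).sub_const θ₀).const_mul 2)
        exact (Real.hasDerivAt_sin _).comp x hinner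
      have := h1.add (h2.const_mul (r₀ ^ 2))
      convert this using 1
      · funext y; simp only [Pi.add_apply]
      ring
    · apply Continuous.intervalIntegrable
      exact continuous_const.add (continuous_const.mul
        (Real.continuous_cos.comp (continuous_const.mul (continuous_id.sub continuous_const))))
  have hcomb : (∫ θ in θ₁..θ₂, g θ) + (∫ θ in θ₁..θ₂, g (θ + π)) =
      ∫ θ in θ₁..θ₂, (2 * a ^ 2 + 2 * r₀ ^ 2 * Real.cos (2 * (θ - θ₀))) := by
    have h2c : Continuous fun θ : ℝ => g (θ + π) := hgc.comp (continuous_add_right π)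
    rw [← intervalIntegral.integral_add (hgc.intervalIntegrable _ _)
      (h2c.intervalIntegrable _ _)]
    exact intervalIntegral.integral_congr fun θ _ => hpt θ
  have hsin : Real.sin (2 * (θ₂ - θ₀)) - Real.sin (2 * (θ₁ - θ₀)) =
      2 * Real.sin (θ₂ - θ₁) * Real.cos (θ₁ + θ₂ - 2 * θ₀) := by
    rw [Real.sin_sub_sin]
    ring_nf
  rw [hS1, hS2, hshift]
  have : (∫ θ in θ₁..θ₂, g θ) + (∫ θ in θ₁..θ₂, g (θ + π)) =
      2 * a ^ 2 * (θ₂ - θ₁) + r₀ ^ 2 * (Real.sin (2 * (θ₂ - θ₀)) - Real.sin (2 * (θ₁ - θ₀))) := by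
    rw [hcomb, hI]; ring
  rw [hsin] at this
  linarith
end

section
/- For every real α, (1/2)·∫_α^{α+2π} r(θ)² dθ = π·a²; that is, the total area of the circle computed by polar integration about the interior pole O equals π a². -/
open Real

/-- For every real α, (1/2)·∫_α^{α+2π} r(θ)² dθ = π·a²: the total area of the circle,
computed by polar integration about the interior pole O, equals π a². -/
theorem polar_integral_total_area (a r₀ θ₀ : ℝ) (ha : 0 < a) (hr₀ : 0 ≤ r₀) (hr₀a : r₀ ≤ a)
    (r : ℝ → ℝ)
    (hr : ∀ θ : ℝ, r θ = r₀ * Real.cos (θ - θ₀) +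
      Real.sqrt (a ^ 2 - r₀ ^ 2 * Real.sin (θ - θ₀) ^ 2)) :
    ∀ α : ℝ, (1 / 2) * ∫ θ in α..(α + 2 * π), r θ ^ 2 = π * a ^ 2 := by
  have hre : r = fun θ => r₀ * Real.cos (θ - θ₀) +
      Real.sqrt (a ^ 2 - r₀ ^ 2 * Real.sin (θ - θ₀) ^ 2) := funext hr
  have hcont : Continuous r := by
    rw [hre]
    fun_prop
  have hcont2 : Continuous fun θ => r θ ^ 2 := hcont.pow 2
  have key : ∀ θ : ℝ, r θ ^ 2 + r (θ + π) ^ 2 =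
      2 * a ^ 2 + 2 * r₀ ^ 2 * Real.cos (2 * (θ - θ₀)) := by
    intro θ
    have hD : 0 ≤ a ^ 2 - r₀ ^ 2 * Real.sin (θ - θ₀) ^ 2 := by
      nlinarith [Real.sin_sq_le_one (θ - θ₀), sq_nonneg (Real.sin (θ - θ₀)),
        sq_nonneg r₀, sq_nonneg (a - r₀), sq_nonneg (a + r₀)]
    have hs := Real.sq_sqrt hD
    have h1 : θ + π - θ₀ = (θ - θ₀) + π := by ring
    rw [hr, hr, h1, Real.cos_add_pi, Real.sin_add_pi]
    have hcos2 : Real.cos (2 * (θ - θ₀)) = 1 - 2 * Real.sin (θ - θ₀) ^ 2 := by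
      rw [Real.cos_two_mul']
      have := Real.sin_sq_add_cos_sq (θ - θ₀); linarith
    rw [neg_sq]
    nlinarith [hs, Real.sin_sq_add_cos_sq (θ - θ₀)]
  intro α
  have hint : ∀ x y : ℝ, IntervalIntegrable (fun θ => r θ ^ 2) MeasureTheory.volume x y :=
    fun x y => hcont2.intervalIntegrable x y
  have h1 : ∫ θ in α..(α + 2 * π), r θ ^ 2 =
      (∫ θ in α..(α + π), r θ ^ 2) + ∫ θ in (α + π)..(α + 2 * π), r θ ^ 2 :=
    (intervalIntegral.integral_add_adjacent_intervals (hint _ _) (hint _ _)).symm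
  have h2 : ∫ θ in (α + π)..(α + 2 * π), r θ ^ 2 = ∫ θ in α..(α + π), r (θ + π) ^ 2 := by
    rw [intervalIntegral.integral_comp_add_right (fun θ => r θ ^ 2) π]
    congr 1; ring
  have h3 : (∫ θ in α..(α + π), r θ ^ 2) + ∫ θ in α..(α + π), r (θ + π) ^ 2 =
      ∫ θ in α..(α + π), (2 * a ^ 2 + 2 * r₀ ^ 2 * Real.cos (2 * (θ - θ₀))) := by
    have hint2 : IntervalIntegrable (fun θ => r (θ + π) ^ 2) MeasureTheory.volume α (α + π) := by
      apply Continuous.intervalIntegrable; fun_prop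
    rw [← intervalIntegral.integral_add (hint _ _) hint2]
    exact intervalIntegral.integral_congr fun θ _ => key θ
  have h4 : ∫ θ in α..(α + π), (2 * a ^ 2 + 2 * r₀ ^ 2 * Real.cos (2 * (θ - θ₀))) =
      2 * π * a ^ 2 := by
    have hderiv : ∀ θ ∈ Set.uIcc α (α + π), HasDerivAt
        (fun θ => 2 * a ^ 2 * θ + r₀ ^ 2 * Real.sin (2 * (θ - θ₀)))
        (2 * a ^ 2 + 2 * r₀ ^ 2 * Real.cos (2 * (θ - θ₀))) θ := by
      intro θ _
      have h5 : HasDerivAt (fun θ : ℝ => 2 * (θ - θ₀)) 2 θ := by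
        simpa using ((hasDerivAt_id θ).sub_const θ₀).const_mul 2
      have h6 := (h5.sin).const_mul (r₀ ^ 2)
      have h7 := (hasDerivAt_id θ).const_mul (2 * a ^ 2)
      exact (h7.add h6).congr_deriv (by ring)
    rw [intervalIntegral.integral_eq_sub_of_hasDerivAt hderiv
      ((by fun_prop : Continuous fun θ : ℝ => 2 * a ^ 2 + 2 * r₀ ^ 2 *
        Real.cos (2 * (θ - θ₀))).intervalIntegrable _ _)]
    have : 2 * (α + π - θ₀) = 2 * (α - θ₀) + 2 * π := by ring
    rw [this, Real.sin_add_two_pi]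
    ring
  rw [h1, h2, h3, h4]
  ring
end

section
/- For all real α ≤ β, the sector area admits the closed form S(α, β) = (a²/2)·(β − α) + (r₀²/4)·(sin 2(β − θ₀) − sin 2(α − θ₀)) + (a²/2)·[(x(β) − x(α)) + (1/2)·(sin 2x(β) − sin 2x(α))], where x(θ) = arcsin((r₀/a)·sin(θ − θ₀)). -/
open Real Set Filter Topology

noncomputable def gfun : ℝ → ℝ := fun y => Real.arcsin y + y * Real.sqrt (1 - y ^ 2)

lemma gfun_cont : Continuous gfun := by
  unfold gfun
  exact Real.continuous_arcsin.add (continuous_id.mul ((continuous_const.sub (continuous_pow 2)).sqrt))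

lemma gfun_of_one_le {y : ℝ} (h : 1 ≤ y) : gfun y = π / 2 := by
  unfold gfun
  rw [Real.arcsin_of_one_le h, Real.sqrt_eq_zero'.2 (by nlinarith)]
  ring

lemma gfun_deriv_lt {y : ℝ} (h1 : -1 < y) (h2 : y < 1) :
    HasDerivAt gfun (2 * Real.sqrt (1 - y ^ 2)) y := by
  have hy2 : (0:ℝ) < 1 - y ^ 2 := by nlinarith
  have harc : HasDerivAt Real.arcsin (1 / Real.sqrt (1 - y ^ 2)) y :=
    Real.hasDerivAt_arcsin (by linarith) (by linarith)
  have h0 : HasDerivAt (fun y : ℝ => 1 - y ^ 2) (-(2 * y)) y := by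
    simpa using (hasDerivAt_pow 2 y).const_sub 1
  have hs : HasDerivAt (fun y : ℝ => Real.sqrt (1 - y ^ 2)) (-y / Real.sqrt (1 - y ^ 2)) y := by
    have := (Real.hasDerivAt_sqrt hy2.ne').comp y h0
    refine this.congr_deriv (Eq.symm ?_)
    field_simp
  have hprod := (hasDerivAt_id y).mul hs
  have hsum := harc.add hprod
  refine hsum.congr_deriv (Eq.symm ?_)
  have hsq : Real.sqrt (1 - y ^ 2) ^ 2 = 1 - y ^ 2 := Real.sq_sqrt hy2.le
  have hpos : 0 < Real.sqrt (1 - y ^ 2) := Real.sqrt_pos.2 hy2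
  field_simp
  rw [id_eq]
  nlinarith [hsq, hpos]

lemma gfun_of_le_neg_one {y : ℝ} (h : y ≤ -1) : gfun y = -(π / 2) := by
  unfold gfun
  rw [Real.arcsin_of_le_neg_one h, Real.sqrt_eq_zero'.2 (by nlinarith)]
  ring

lemma gfun_deriv (y : ℝ) : HasDerivAt gfun (2 * Real.sqrt (1 - y ^ 2)) y := by
  rcases lt_trichotomy y 1 with hy1 | rfl | hy1
  · rcases lt_trichotomy (-1) y with hy2 | rfl | hy2
    · exact gfun_deriv_lt hy2 hy1
    · -- y = -1
      have A : HasDerivWithinAt gfun 0 (Iic (-1 : ℝ)) (-1) := by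
        refine (hasDerivWithinAt_const (-1 : ℝ) _ (-(π/2))).congr ?_ ?_
        · intro z hz; exact gfun_of_le_neg_one hz
        · exact gfun_of_le_neg_one le_rfl
      have B : HasDerivWithinAt gfun 0 (Ici (-1 : ℝ)) (-1) := by
        apply hasDerivWithinAt_Ici_of_tendsto_deriv (s := Ioo (-1 : ℝ) 0)
        · intro z hz
          exact (gfun_deriv_lt hz.1 (by linarith [hz.2])).differentiableAt.differentiableWithinAt
        · exact gfun_cont.continuousWithinAt
        · exact Ioo_mem_nhdsGT_of_mem ⟨le_rfl, by norm_num⟩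
        · have hc : Tendsto (fun z : ℝ => 2 * Real.sqrt (1 - z ^ 2)) (𝓝[>] (-1 : ℝ))
              (𝓝 (2 * Real.sqrt (1 - (-1 : ℝ) ^ 2))) :=
            ((continuous_const.mul ((continuous_const.sub (continuous_pow 2)).sqrt)).tendsto _).mono_left
              nhdsWithin_le_nhds
          have : (2 : ℝ) * Real.sqrt (1 - (-1 : ℝ) ^ 2) = 0 := by norm_num
          rw [this] at hc
          refine hc.congr' ?_
          filter_upwards [Ioo_mem_nhdsGT_of_mem (show (-1:ℝ) ∈ Ico (-1:ℝ) 0 by constructor <;> norm_num)] with z hz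
          exact ((gfun_deriv_lt hz.1 (by linarith [hz.2])).deriv).symm
      simpa [show (2:ℝ) * Real.sqrt (1 - (-1:ℝ) ^ 2) = 0 by norm_num] using A.union B
    · -- y < -1
      have hev : gfun =ᶠ[𝓝 y] (fun _ => -(π/2)) := by
        filter_upwards [Iio_mem_nhds hy2] with z hz
        exact gfun_of_le_neg_one (le_of_lt hz)
      have : HasDerivAt gfun 0 y := (hasDerivAt_const y (-(π/2))).congr_of_eventuallyEq hev
      convert this using 1
      rw [Real.sqrt_eq_zero'.2 (by nlinarith)]; ring
  · -- y = 1
    have A : HasDerivWithinAt gfun 0 (Ici (1 : ℝ)) 1 := by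
      refine (hasDerivWithinAt_const (1 : ℝ) _ (π/2)).congr ?_ ?_
      · intro z hz; exact gfun_of_one_le hz
      · exact gfun_of_one_le le_rfl
    have B : HasDerivWithinAt gfun 0 (Iic (1 : ℝ)) 1 := by
      apply hasDerivWithinAt_Iic_of_tendsto_deriv (s := Ioo (0 : ℝ) 1)
      · intro z hz
        exact (gfun_deriv_lt (by linarith [hz.1]) hz.2).differentiableAt.differentiableWithinAt
      · exact gfun_cont.continuousWithinAt
      · exact Ioo_mem_nhdsLT_of_mem ⟨by norm_num, le_rfl⟩
      · have hc : Tendsto (fun z : ℝ => 2 * Real.sqrt (1 - z ^ 2)) (𝓝[<] (1 : ℝ))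
            (𝓝 (2 * Real.sqrt (1 - (1 : ℝ) ^ 2))) :=
          ((continuous_const.mul ((continuous_const.sub (continuous_pow 2)).sqrt)).tendsto _).mono_left
            nhdsWithin_le_nhds
        have : (2 : ℝ) * Real.sqrt (1 - (1 : ℝ) ^ 2) = 0 := by norm_num
        rw [this] at hc
        refine hc.congr' ?_
        filter_upwards [Ioo_mem_nhdsLT_of_mem (show (1:ℝ) ∈ Ioc (0:ℝ) 1 by constructor <;> norm_num)] with z hz
        exact ((gfun_deriv_lt (by linarith [hz.1]) hz.2).deriv).symm
    simpa [show (2:ℝ) * Real.sqrt (1 - (1:ℝ) ^ 2) = 0 by norm_num] using B.union A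
  · -- y > 1
    have hev : gfun =ᶠ[𝓝 y] (fun _ => π/2) := by
      filter_upwards [Ioi_mem_nhds hy1] with z hz
      exact gfun_of_one_le (le_of_lt hz)
    have : HasDerivAt gfun 0 y := (hasDerivAt_const y (π/2)).congr_of_eventuallyEq hev
    convert this using 1
    rw [Real.sqrt_eq_zero'.2 (by nlinarith)]; ring

/-- Closed form for the sector area: for all real α ≤ β,
S(α,β) = (a²/2)(β−α) + (r₀²/4)(sin 2(β−θ₀) − sin 2(α−θ₀))
        + (a²/2)[(x(β) − x(α)) + (1/2)(sin 2x(β) − sin 2x(α))],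
where x(θ) = arcsin((r₀/a)·sin(θ − θ₀)). -/
theorem sector_area_closed_form (a r₀ θ₀ : ℝ) (ha : 0 < a) (hr₀ : 0 < r₀) (hr₀a : r₀ ≤ a)
    (S : ℝ → ℝ → ℝ)
    (hS : ∀ α β : ℝ, α ≤ β → S α β = (1 / 2) * ∫ θ in α..β,
      (r₀ * Real.cos (θ - θ₀) + Real.sqrt (a ^ 2 - r₀ ^ 2 * Real.sin (θ - θ₀) ^ 2)) ^ 2)
    (x : ℝ → ℝ)
    (hx : ∀ θ : ℝ, x θ = Real.arcsin ((r₀ / a) * Real.sin (θ - θ₀))) :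
    ∀ α β : ℝ, α ≤ β →
      S α β = a ^ 2 / 2 * (β - α) +
        r₀ ^ 2 / 4 * (Real.sin (2 * (β - θ₀)) - Real.sin (2 * (α - θ₀))) +
        a ^ 2 / 2 * ((x β - x α) + (1 / 2) * (Real.sin (2 * x β) - Real.sin (2 * x α))) := by
  intro α β hab
  have ha' : a ≠ 0 := ne_of_gt ha
  set k : ℝ := r₀ / a with hk
  have hka : k * a = r₀ := div_mul_cancel₀ r₀ ha'
  set u : ℝ → ℝ := fun θ => k * Real.sin (θ - θ₀) with hu
  have hu_deriv : ∀ θ : ℝ, HasDerivAt u (k * Real.cos (θ - θ₀)) θ := by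
    intro θ
    have hin : HasDerivAt (fun θ : ℝ => θ - θ₀) 1 θ := (hasDerivAt_id θ).sub_const θ₀
    have := ((Real.hasDerivAt_sin (θ - θ₀)).comp θ hin).const_mul k
    simpa using this
  have hubd : ∀ θ : ℝ, -1 ≤ u θ ∧ u θ ≤ 1 := by
    intro θ
    have h1 := Real.neg_one_le_sin (θ - θ₀)
    have h2 := Real.sin_le_one (θ - θ₀)
    have hk0 : 0 < k := div_pos hr₀ ha
    have hk1 : k ≤ 1 := (div_le_one ha).2 hr₀a
    have huθ : u θ = k * Real.sin (θ - θ₀) := rfl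
    rw [huθ]
    constructor
    · nlinarith [mul_le_mul_of_nonneg_left h1 hk0.le]
    · nlinarith [mul_le_mul_of_nonneg_left h2 hk0.le]
  set G : ℝ → ℝ := fun θ =>
    a ^ 2 / 2 * θ + r₀ ^ 2 / 4 * Real.sin (2 * (θ - θ₀)) + a ^ 2 / 2 * gfun (u θ) with hG
  have key : ∀ θ : ℝ, HasDerivAt G
      ((1 / 2) * (r₀ * Real.cos (θ - θ₀) + Real.sqrt (a ^ 2 - r₀ ^ 2 * Real.sin (θ - θ₀) ^ 2)) ^ 2) θ := by
    intro θ
    set s : ℝ := Real.sin (θ - θ₀)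
    set c : ℝ := Real.cos (θ - θ₀)
    have h1 : HasDerivAt (fun θ : ℝ => a ^ 2 / 2 * θ) (a ^ 2 / 2) θ := by
      simpa using (hasDerivAt_id θ).const_mul (a ^ 2 / 2)
    have hin2 : HasDerivAt (fun θ : ℝ => 2 * (θ - θ₀)) 2 θ := by
      simpa using ((hasDerivAt_id θ).sub_const θ₀).const_mul 2
    have h2 : HasDerivAt (fun θ : ℝ => r₀ ^ 2 / 4 * Real.sin (2 * (θ - θ₀)))
        (r₀ ^ 2 / 4 * (Real.cos (2 * (θ - θ₀)) * 2)) θ :=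
      ((Real.hasDerivAt_sin (2 * (θ - θ₀))).comp θ hin2).const_mul (r₀ ^ 2 / 4)
    have h3 : HasDerivAt (fun θ : ℝ => a ^ 2 / 2 * gfun (u θ))
        (a ^ 2 / 2 * (2 * Real.sqrt (1 - u θ ^ 2) * (k * c))) θ :=
      (((gfun_deriv (u θ)).comp θ (hu_deriv θ))).const_mul (a ^ 2 / 2)
    have hsum := (h1.add h2).add h3
    refine hsum.congr_deriv (Eq.symm ?_)
    have hnn : 0 ≤ 1 - u θ ^ 2 := by
      obtain ⟨hl, hr⟩ := hubd θ; nlinarith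
    have hw : Real.sqrt (a ^ 2 - r₀ ^ 2 * s ^ 2) = a * Real.sqrt (1 - u θ ^ 2) := by
      have heq : a ^ 2 - r₀ ^ 2 * s ^ 2 = a ^ 2 * (1 - u θ ^ 2) := by
        have : u θ = k * s := rfl
        rw [this, hk]; field_simp
      rw [heq, Real.sqrt_mul (sq_nonneg a), Real.sqrt_sq ha.le]
    have hsq : Real.sqrt (1 - u θ ^ 2) ^ 2 = 1 - u θ ^ 2 := Real.sq_sqrt hnn
    have hpyth : s ^ 2 + c ^ 2 = 1 := Real.sin_sq_add_cos_sq (θ - θ₀)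
    have hcos2 : Real.cos (2 * (θ - θ₀)) = 2 * c ^ 2 - 1 := Real.cos_two_mul (θ - θ₀)
    have huks : u θ = k * s := rfl
    rw [hw, hcos2]
    set W : ℝ := Real.sqrt (1 - u θ ^ 2)
    rw [huks] at hsq
    have hks : k * s * a = r₀ * s := by rw [mul_comm k s, mul_assoc, hka]; ring
    linear_combination (a ^ 2 / 2) * hsq + (-(r₀ ^ 2 / 2)) * hpyth +
      (-(a * W * c + (r₀ + a * k) * s ^ 2 / 2)) * hka
  have hcont : Continuous (fun θ : ℝ =>
      (1 / 2) * (r₀ * Real.cos (θ - θ₀) + Real.sqrt (a ^ 2 - r₀ ^ 2 * Real.sin (θ - θ₀) ^ 2)) ^ 2) := by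
    apply continuous_const.mul
    apply Continuous.pow
    apply Continuous.add
    · exact continuous_const.mul (Real.continuous_cos.comp (continuous_id.sub continuous_const))
    · exact (continuous_const.sub (continuous_const.mul
        ((Real.continuous_sin.comp (continuous_id.sub continuous_const)).pow 2))).sqrt
  have hftc : (∫ θ in α..β,
      (1 / 2) * (r₀ * Real.cos (θ - θ₀) + Real.sqrt (a ^ 2 - r₀ ^ 2 * Real.sin (θ - θ₀) ^ 2)) ^ 2)
      = G β - G α :=
    intervalIntegral.integral_eq_sub_of_hasDerivAt (fun θ _ => key θ)
      (hcont.intervalIntegrable α β)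
  have hxg : ∀ θ : ℝ, x θ + (1 / 2) * Real.sin (2 * x θ) = gfun (u θ) := by
    intro θ
    obtain ⟨hl, hr⟩ := hubd θ
    rw [hx θ]
    have huθ : (r₀ / a) * Real.sin (θ - θ₀) = u θ := rfl
    rw [huθ, Real.sin_two_mul, Real.sin_arcsin hl hr, Real.cos_arcsin]
    unfold gfun
    ring
  have hrw : (x β - x α) + (1 / 2) * (Real.sin (2 * x β) - Real.sin (2 * x α))
      = gfun (u β) - gfun (u α) := by
    have h1 := hxg β; have h2 := hxg α; linarith
  rw [hS α β hab, ← intervalIntegral.integral_const_mul, hftc, hrw, hG]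
  ring
end

section
/- In the eight-sector configuration, the area sum of one set of alternative sectors satisfies S₁ + S₃ + S₅ + S₇ = (r₀²/2)·[sin 2(θ₂ − θ₀) − sin 2(θ₁ − θ₀) + sin 2(θ₄ − θ₀) − sin 2(θ₃ − θ₀)] + a²·(θ₂ − θ₁ + θ₄ − θ₃). -/
open Real

private lemma pair_sum (a r₀ θ₀ α β : ℝ) (hr₀ : 0 ≤ r₀) (hr₀a : r₀ ≤ a) :
    (1 / 2 : ℝ) * (∫ θ in α..β,
        (r₀ * Real.cos (θ - θ₀) + Real.sqrt (a ^ 2 - r₀ ^ 2 * Real.sin (θ - θ₀) ^ 2)) ^ 2)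
      + (1 / 2 : ℝ) * (∫ θ in (α + π)..(β + π),
        (r₀ * Real.cos (θ - θ₀) + Real.sqrt (a ^ 2 - r₀ ^ 2 * Real.sin (θ - θ₀) ^ 2)) ^ 2)
    = r₀ ^ 2 / 2 * (Real.sin (2 * (β - θ₀)) - Real.sin (2 * (α - θ₀))) + a ^ 2 * (β - α) := by
  have hcont : Continuous fun θ : ℝ =>
      (r₀ * Real.cos (θ - θ₀) + Real.sqrt (a ^ 2 - r₀ ^ 2 * Real.sin (θ - θ₀) ^ 2)) ^ 2 := by
    apply Continuous.pow
    exact ((continuous_const.mul ((Real.continuous_cos).comp (continuous_id.sub continuous_const)))).add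
      (Real.continuous_sqrt.comp (continuous_const.sub (continuous_const.mul
        (((Real.continuous_sin).comp (continuous_id.sub continuous_const)).pow 2))))
  have hshift : (∫ θ in (α + π)..(β + π),
      (r₀ * Real.cos (θ - θ₀) + Real.sqrt (a ^ 2 - r₀ ^ 2 * Real.sin (θ - θ₀) ^ 2)) ^ 2)
      = ∫ θ in α..β,
      (r₀ * Real.cos (θ + π - θ₀) + Real.sqrt (a ^ 2 - r₀ ^ 2 * Real.sin (θ + π - θ₀) ^ 2)) ^ 2 := by
    rw [← intervalIntegral.integral_comp_add_right]
  have hcont2 : Continuous fun θ : ℝ =>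
      (r₀ * Real.cos (θ + π - θ₀) + Real.sqrt (a ^ 2 - r₀ ^ 2 * Real.sin (θ + π - θ₀) ^ 2)) ^ 2 := by
    apply Continuous.pow
    exact ((continuous_const.mul ((Real.continuous_cos).comp ((continuous_id.add continuous_const).sub continuous_const)))).add
      (Real.continuous_sqrt.comp (continuous_const.sub (continuous_const.mul
        (((Real.continuous_sin).comp ((continuous_id.add continuous_const).sub continuous_const)).pow 2))))
  rw [hshift, ← mul_add,
    ← intervalIntegral.integral_add (hcont.intervalIntegrable _ _) (hcont2.intervalIntegrable _ _)]
  have key : ∀ θ : ℝ,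
      (r₀ * Real.cos (θ - θ₀) + Real.sqrt (a ^ 2 - r₀ ^ 2 * Real.sin (θ - θ₀) ^ 2)) ^ 2
        + (r₀ * Real.cos (θ + π - θ₀) + Real.sqrt (a ^ 2 - r₀ ^ 2 * Real.sin (θ + π - θ₀) ^ 2)) ^ 2
      = 2 * a ^ 2 + 2 * r₀ ^ 2 * Real.cos (2 * (θ - θ₀)) := by
    intro θ
    have harg : θ + π - θ₀ = (θ - θ₀) + π := by ring
    have hnn : 0 ≤ a ^ 2 - r₀ ^ 2 * Real.sin (θ - θ₀) ^ 2 := by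
      nlinarith [Real.sin_sq_le_one (θ - θ₀), sq_nonneg (Real.sin (θ - θ₀)), sq_nonneg r₀]
    have hq := Real.sq_sqrt hnn
    rw [harg, Real.cos_add_pi, Real.sin_add_pi, neg_sq]
    linear_combination 2 * hq - 2 * r₀ ^ 2 * Real.cos_two_mul (θ - θ₀)
      - 2 * r₀ ^ 2 * Real.sin_sq_add_cos_sq (θ - θ₀)
  rw [intervalIntegral.integral_congr (g := fun θ => 2 * a ^ 2 + 2 * r₀ ^ 2 * Real.cos (2 * (θ - θ₀)))
    (fun θ _ => key θ)]
  have hF : ∀ θ : ℝ, HasDerivAt (fun θ : ℝ => 2 * a ^ 2 * θ + r₀ ^ 2 * Real.sin (2 * (θ - θ₀)))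
      (2 * a ^ 2 + 2 * r₀ ^ 2 * Real.cos (2 * (θ - θ₀))) θ := by
    intro θ
    have h1 : HasDerivAt (fun θ : ℝ => 2 * (θ - θ₀)) 2 θ := by
      simpa using ((hasDerivAt_id θ).sub_const θ₀).const_mul 2
    have h2 : HasDerivAt (fun θ : ℝ => Real.sin (2 * (θ - θ₀)))
        (Real.cos (2 * (θ - θ₀)) * 2) θ := (Real.hasDerivAt_sin _).comp θ h1
    have h3 := ((hasDerivAt_id θ).const_mul (2 * a ^ 2)).add (h2.const_mul (r₀ ^ 2))
    exact h3.congr_deriv (by ring)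
  rw [intervalIntegral.integral_eq_sub_of_hasDerivAt (fun θ _ => hF θ)
    (((continuous_const.add (continuous_const.mul ((Real.continuous_cos).comp
      (continuous_const.mul (continuous_id.sub continuous_const))))).intervalIntegrable _ _))]
  ring

/-- Eight-sector configuration: the area sum of one set of alternative sectors satisfies
S₁ + S₃ + S₅ + S₇ = (r₀²/2)[sin 2(θ₂−θ₀) − sin 2(θ₁−θ₀) + sin 2(θ₄−θ₀) − sin 2(θ₃−θ₀)]
                    + a²(θ₂ − θ₁ + θ₄ − θ₃). -/
theorem eight_sector_odd_sum (a r₀ θ₀ θ₁ θ₂ θ₃ θ₄ : ℝ)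
    (ha : 0 < a) (hr₀ : 0 ≤ r₀) (hr₀a : r₀ ≤ a)
    (h12 : θ₁ < θ₂) (h23 : θ₂ < θ₃) (h34 : θ₃ < θ₄) (h41 : θ₄ < θ₁ + π)
    (S : ℝ → ℝ → ℝ)
    (hS : ∀ α β : ℝ, α ≤ β → S α β = (1 / 2) * ∫ θ in α..β,
      (r₀ * Real.cos (θ - θ₀) + Real.sqrt (a ^ 2 - r₀ ^ 2 * Real.sin (θ - θ₀) ^ 2)) ^ 2) :
    S θ₁ θ₂ + S θ₃ θ₄ + S (θ₁ + π) (θ₂ + π) + S (θ₃ + π) (θ₄ + π) =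
      r₀ ^ 2 / 2 * (Real.sin (2 * (θ₂ - θ₀)) - Real.sin (2 * (θ₁ - θ₀)) +
        Real.sin (2 * (θ₄ - θ₀)) - Real.sin (2 * (θ₃ - θ₀))) +
      a ^ 2 * (θ₂ - θ₁ + θ₄ - θ₃) := by
  rw [hS _ _ h12.le, hS _ _ h34.le, hS _ _ (by linarith), hS _ _ (by linarith)]
  have p1 := pair_sum a r₀ θ₀ θ₁ θ₂ hr₀ hr₀a
  have p2 := pair_sum a r₀ θ₀ θ₃ θ₄ hr₀ hr₀a
  linarith [p1, p2]
end

section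
/- In the eight-sector configuration, the two alternative area sums are equal, S₁+S₃+S₅+S₇ = S₂+S₄+S₆+S₈, if and only if (r₀²/2)·[sin 2(θ₂−θ₀) − sin 2(θ₁−θ₀) + sin 2(θ₄−θ₀) − sin 2(θ₃−θ₀)] + a²·(θ₂ − θ₁ + θ₄ − θ₃ − π/2) = 0. -/
open Real

/-! Opposite rays through `O` pair up: in `r(θ)² + r(θ + π)²` the cross terms `± 2 r₀ cos · √…`
cancel, leaving `2a² + 2r₀² cos 2(θ − θ₀)`. So a sector together with its opposite sector has area
`a²(β − α) + (r₀²/2)(sin 2(β − θ₀) − sin 2(α − θ₀))`, and summing these over the four pairs shows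
that the difference of the two alternating sums is twice the stated expression. -/

noncomputable def polarRadius (a r₀ θ₀ θ : ℝ) : ℝ :=
  r₀ * cos (θ - θ₀) + √(a ^ 2 - r₀ ^ 2 * sin (θ - θ₀) ^ 2)

@[fun_prop]
theorem continuous_polarRadius (a r₀ θ₀ : ℝ) : Continuous (polarRadius a r₀ θ₀) := by
  unfold polarRadius; fun_prop

theorem polarRadius_sq_add_polarRadius_add_pi_sq {a r₀ : ℝ} (h : r₀ ^ 2 ≤ a ^ 2) (θ₀ θ : ℝ) :
    polarRadius a r₀ θ₀ θ ^ 2 + polarRadius a r₀ θ₀ (θ + π) ^ 2 =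
      2 * a ^ 2 + 2 * r₀ ^ 2 * cos (2 * (θ - θ₀)) := by
  have hnonneg : 0 ≤ a ^ 2 - r₀ ^ 2 * sin (θ - θ₀) ^ 2 := by
    nlinarith [sin_sq_le_one (θ - θ₀), sq_nonneg r₀]
  rw [polarRadius, polarRadius, show θ + π - θ₀ = θ - θ₀ + π by ring, cos_add_pi, sin_add_pi,
    neg_sq, cos_two_mul, ← sin_sq_add_cos_sq (θ - θ₀)]
  nlinarith [sq_sqrt hnonneg]

theorem intervalIntegral.integral_add_integral_comp_add_right {E : Type*} [NormedAddCommGroup E]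
    [NormedSpace ℝ E] {f : ℝ → E} (hf : Continuous f) (α β c : ℝ) :
    (∫ θ in α..β, f θ) + ∫ θ in α + c..β + c, f θ = ∫ θ in α..β, (f θ + f (θ + c)) := by
  rw [← intervalIntegral.integral_comp_add_right f c]
  exact (intervalIntegral.integral_add (hf.intervalIntegrable _ _)
    ((hf.comp (continuous_add_const c)).intervalIntegrable _ _)).symm

theorem integral_const_add_mul_cos_two_mul_sub (A B θ₀ α β : ℝ) :
    ∫ θ in α..β, (A + B * cos (2 * (θ - θ₀))) =
      A * (β - α) + B / 2 * (sin (2 * (β - θ₀)) - sin (2 * (α - θ₀))) := by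
  simp only [mul_sub]
  rw [intervalIntegral.integral_add intervalIntegrable_const
      (by apply Continuous.intervalIntegrable; fun_prop),
    intervalIntegral.integral_const_mul, intervalIntegral.integral_comp_mul_sub cos two_ne_zero,
    integral_cos, intervalIntegral.integral_const, smul_eq_mul, smul_eq_mul]
  ring

theorem integral_polarRadius_sq_add_integral_add_pi {a r₀ : ℝ} (h : r₀ ^ 2 ≤ a ^ 2) (θ₀ α β : ℝ) :
    (∫ θ in α..β, polarRadius a r₀ θ₀ θ ^ 2) + ∫ θ in α + π..β + π, polarRadius a r₀ θ₀ θ ^ 2 =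
      2 * a ^ 2 * (β - α) + r₀ ^ 2 * (sin (2 * (β - θ₀)) - sin (2 * (α - θ₀))) := by
  rw [intervalIntegral.integral_add_integral_comp_add_right (by fun_prop),
    intervalIntegral.integral_congr fun θ _ => polarRadius_sq_add_polarRadius_add_pi_sq h θ₀ θ,
    integral_const_add_mul_cos_two_mul_sub]
  ring

theorem eight_sector_equal_iff_general (a r₀ θ₀ θ₁ θ₂ θ₃ θ₄ : ℝ)
    (hr₀ : 0 ≤ r₀) (hr₀a : r₀ ≤ a)
    (h12 : θ₁ < θ₂) (h23 : θ₂ < θ₃) (h34 : θ₃ < θ₄) (h41 : θ₄ < θ₁ + π)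
    (S : ℝ → ℝ → ℝ)
    (hS : ∀ α β : ℝ, α ≤ β → S α β = (1 / 2) * ∫ θ in α..β,
      (r₀ * Real.cos (θ - θ₀) + Real.sqrt (a ^ 2 - r₀ ^ 2 * Real.sin (θ - θ₀) ^ 2)) ^ 2) :
    S θ₁ θ₂ + S θ₃ θ₄ + S (θ₁ + π) (θ₂ + π) + S (θ₃ + π) (θ₄ + π) =
      S θ₂ θ₃ + S θ₄ (θ₁ + π) + S (θ₂ + π) (θ₃ + π) + S (θ₄ + π) (θ₁ + 2 * π) ↔
    r₀ ^ 2 / 2 * (Real.sin (2 * (θ₂ - θ₀)) - Real.sin (2 * (θ₁ - θ₀)) +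
      Real.sin (2 * (θ₄ - θ₀)) - Real.sin (2 * (θ₃ - θ₀))) +
      a ^ 2 * (θ₂ - θ₁ + θ₄ - θ₃ - π / 2) = 0 := by
  have hr : r₀ ^ 2 ≤ a ^ 2 := pow_le_pow_left₀ hr₀ hr₀a 2
  have opposite_pair : ∀ α β, α ≤ β → S α β + S (α + π) (β + π) =
      a ^ 2 * (β - α) + r₀ ^ 2 / 2 * (sin (2 * (β - θ₀)) - sin (2 * (α - θ₀))) := by
    intro α β hαβ
    have h := integral_polarRadius_sq_add_integral_add_pi hr θ₀ α β
    unfold polarRadius at h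
    rw [hS α β hαβ, hS (α + π) (β + π) (by linarith)]
    linarith
  have hperiodic : sin (2 * (θ₁ + π - θ₀)) = sin (2 * (θ₁ - θ₀)) := by
    rw [show 2 * (θ₁ + π - θ₀) = 2 * (θ₁ - θ₀) + 2 * π by ring, sin_add_two_pi]
  rw [show θ₁ + 2 * π = θ₁ + π + π by ring]
  have p12 := opposite_pair θ₁ θ₂ h12.le
  have p23 := opposite_pair θ₂ θ₃ h23.le
  have p34 := opposite_pair θ₃ θ₄ h34.le
  have p41 := opposite_pair θ₄ (θ₁ + π) h41.le
  rw [hperiodic] at p41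
  constructor <;> intro h <;> linarith

/-- Eight-sector configuration: the alternative area sums are equal iff
(r₀²/2)[sin 2(θ₂−θ₀) − sin 2(θ₁−θ₀) + sin 2(θ₄−θ₀) − sin 2(θ₃−θ₀)]
  + a²(θ₂ − θ₁ + θ₄ − θ₃ − π/2) = 0. -/
theorem eight_sector_equal_iff (a r₀ θ₀ θ₁ θ₂ θ₃ θ₄ : ℝ)
    (ha : 0 < a) (hr₀ : 0 ≤ r₀) (hr₀a : r₀ ≤ a)
    (h12 : θ₁ < θ₂) (h23 : θ₂ < θ₃) (h34 : θ₃ < θ₄) (h41 : θ₄ < θ₁ + π)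
    (S : ℝ → ℝ → ℝ)
    (hS : ∀ α β : ℝ, α ≤ β → S α β = (1 / 2) * ∫ θ in α..β,
      (r₀ * Real.cos (θ - θ₀) + Real.sqrt (a ^ 2 - r₀ ^ 2 * Real.sin (θ - θ₀) ^ 2)) ^ 2) :
    S θ₁ θ₂ + S θ₃ θ₄ + S (θ₁ + π) (θ₂ + π) + S (θ₃ + π) (θ₄ + π) =
      S θ₂ θ₃ + S θ₄ (θ₁ + π) + S (θ₂ + π) (θ₃ + π) + S (θ₄ + π) (θ₁ + 2 * π) ↔
    r₀ ^ 2 / 2 * (Real.sin (2 * (θ₂ - θ₀)) - Real.sin (2 * (θ₁ - θ₀)) +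
      Real.sin (2 * (θ₄ - θ₀)) - Real.sin (2 * (θ₃ - θ₀))) +
      a ^ 2 * (θ₂ - θ₁ + θ₄ - θ₃ - π / 2) = 0 :=
  eight_sector_equal_iff_general a r₀ θ₀ θ₁ θ₂ θ₃ θ₄ hr₀ hr₀a h12 h23 h34 h41 S hS
end

section
/- In the eight-sector configuration, if (θ₂−θ₁) + (θ₄−θ₃) = π/2 and sin 2(θ₄−θ₀) + sin 2(θ₂−θ₀) = sin 2(θ₃−θ₀) + sin 2(θ₁−θ₀), then S₁+S₃+S₅+S₇ = (π/2)·a² = S₂+S₄+S₆+S₈. -/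
open Real

/-- Eight-sector configuration: if (θ₂−θ₁) + (θ₄−θ₃) = π/2 and
sin 2(θ₄−θ₀) + sin 2(θ₂−θ₀) = sin 2(θ₃−θ₀) + sin 2(θ₁−θ₀), then
S₁+S₃+S₅+S₇ = (π/2)·a² = S₂+S₄+S₆+S₈. -/
theorem eight_sector_special_case (a r₀ θ₀ θ₁ θ₂ θ₃ θ₄ : ℝ)
    (ha : 0 < a) (hr₀ : 0 ≤ r₀) (hr₀a : r₀ ≤ a)
    (h12 : θ₁ < θ₂) (h23 : θ₂ < θ₃) (h34 : θ₃ < θ₄) (h41 : θ₄ < θ₁ + π)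
    (S : ℝ → ℝ → ℝ)
    (hS : ∀ α β : ℝ, α ≤ β → S α β = (1 / 2) * ∫ θ in α..β,
      (r₀ * Real.cos (θ - θ₀) + Real.sqrt (a ^ 2 - r₀ ^ 2 * Real.sin (θ - θ₀) ^ 2)) ^ 2)
    (hsum : (θ₂ - θ₁) + (θ₄ - θ₃) = π / 2)
    (hsin : Real.sin (2 * (θ₄ - θ₀)) + Real.sin (2 * (θ₂ - θ₀)) =
      Real.sin (2 * (θ₃ - θ₀)) + Real.sin (2 * (θ₁ - θ₀))) :
    S θ₁ θ₂ + S θ₃ θ₄ + S (θ₁ + π) (θ₂ + π) + S (θ₃ + π) (θ₄ + π) = π / 2 * a ^ 2 ∧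
    S θ₂ θ₃ + S θ₄ (θ₁ + π) + S (θ₂ + π) (θ₃ + π) + S (θ₄ + π) (θ₁ + 2 * π) =
      π / 2 * a ^ 2 := by
  have hπ := Real.pi_pos
  have harg : ∀ θ : ℝ, 0 ≤ a ^ 2 - r₀ ^ 2 * Real.sin (θ - θ₀) ^ 2 := by
    intro θ
    nlinarith [Real.sin_sq_le_one (θ - θ₀), sq_nonneg (Real.sin (θ - θ₀)), sq_nonneg r₀]
  set f : ℝ → ℝ := fun θ =>
      (r₀ * Real.cos (θ - θ₀) + Real.sqrt (a ^ 2 - r₀ ^ 2 * Real.sin (θ - θ₀) ^ 2)) ^ 2 with hf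
  have hcont : Continuous f := by
    rw [hf]; fun_prop
  have hint : ∀ α β : ℝ, IntervalIntegrable f MeasureTheory.volume α β :=
    fun α β => hcont.intervalIntegrable α β
  have hcos : ∀ α β : ℝ, (∫ θ in α..β, Real.cos (2 * (θ - θ₀)))
      = (Real.sin (2 * (β - θ₀)) - Real.sin (2 * (α - θ₀))) / 2 := by
    intro α β
    have h : ∀ θ : ℝ, 2 * (θ - θ₀) = 2 * θ + (-2 * θ₀) := fun θ => by ring
    simp_rw [h]
    rw [intervalIntegral.integral_comp_mul_add Real.cos two_ne_zero (-2 * θ₀),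
      integral_cos]
    simp only [smul_eq_mul]
    ring_nf
  have key : ∀ α β : ℝ, α ≤ β → S α β + S (α + π) (β + π)
      = a ^ 2 * (β - α) + r₀ ^ 2 / 2 * (Real.sin (2 * (β - θ₀)) - Real.sin (2 * (α - θ₀))) := by
    intro α β hαβ
    rw [hS α β hαβ, hS (α + π) (β + π) (by linarith)]
    have h2 : (∫ θ in (α + π)..(β + π), f θ) = ∫ θ in α..β, f (θ + π) := by
      rw [intervalIntegral.integral_comp_add_right]
    have hpw : ∀ θ : ℝ, f θ + f (θ + π) = 2 * a ^ 2 + 2 * r₀ ^ 2 * Real.cos (2 * (θ - θ₀)) := by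
      intro θ
      have e1 : θ + π - θ₀ = (θ - θ₀) + π := by ring
      have hsq : Real.sqrt (a ^ 2 - r₀ ^ 2 * Real.sin (θ - θ₀) ^ 2) ^ 2
          = a ^ 2 - r₀ ^ 2 * Real.sin (θ - θ₀) ^ 2 := Real.sq_sqrt (harg θ)
      have hc2 : Real.cos (2 * (θ - θ₀)) = Real.cos (θ - θ₀) ^ 2 - Real.sin (θ - θ₀) ^ 2 := by
        rw [Real.cos_two_mul]
        nlinarith [Real.sin_sq_add_cos_sq (θ - θ₀)]
      simp only [hf, e1, Real.cos_add_pi, Real.sin_add_pi, neg_sq]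
      linear_combination 2 * hsq - 2 * r₀ ^ 2 * hc2
    have hsum2 : (∫ θ in α..β, f θ) + ∫ θ in α..β, f (θ + π)
        = ∫ θ in α..β, (2 * a ^ 2 + 2 * r₀ ^ 2 * Real.cos (2 * (θ - θ₀))) := by
      have hint2 : IntervalIntegrable (fun θ => f (θ + π)) MeasureTheory.volume α β :=
        Continuous.intervalIntegrable (by rw [hf]; fun_prop) α β
      rw [← intervalIntegral.integral_add (hint α β) hint2]
      exact intervalIntegral.integral_congr fun θ _ => hpw θ
    have hci : ∫ θ in α..β, (2 * a ^ 2 + 2 * r₀ ^ 2 * Real.cos (2 * (θ - θ₀)))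
        = 2 * a ^ 2 * (β - α) + 2 * r₀ ^ 2 * ((Real.sin (2 * (β - θ₀)) - Real.sin (2 * (α - θ₀))) / 2) := by
      rw [intervalIntegral.integral_add (continuous_const.intervalIntegrable α β)
        ((Continuous.intervalIntegrable (by fun_prop) α β)),
        intervalIntegral.integral_const, intervalIntegral.integral_const_mul, hcos]
      simp [smul_eq_mul]; ring
    have := hsum2.trans hci
    rw [h2]
    linarith [this]
  have k1 := key θ₁ θ₂ h12.le
  have k2 := key θ₃ θ₄ h34.le
  have k3 := key θ₂ θ₃ h23.le
  have k4 := key θ₄ (θ₁ + π) h41.le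
  have h2pi : θ₁ + π + π = θ₁ + 2 * π := by ring
  rw [h2pi] at k4
  have hper : Real.sin (2 * (θ₁ + π - θ₀)) = Real.sin (2 * (θ₁ - θ₀)) := by
    rw [show 2 * (θ₁ + π - θ₀) = 2 * (θ₁ - θ₀) + 2 * π by ring, Real.sin_add_two_pi]
  rw [hper] at k4
  constructor
  · linear_combination k1 + k2 + a ^ 2 * hsum + r₀ ^ 2 / 2 * hsin
  · linear_combination k3 + k4 - a ^ 2 * hsum - r₀ ^ 2 / 2 * hsin
end

section
/- Let θ₀, θ₁, θ₂, θ₃, θ₄ be real numbers with (θ₂−θ₁) + (θ₄−θ₃) = π/2 and cos(θ₁+θ₃−2θ₀) ≠ 0. Then sin 2(θ₄−θ₀) + sin 2(θ₂−θ₀) = sin 2(θ₃−θ₀) + sin 2(θ₁−θ₀) holds if and only if cos(θ₄−θ₂) = tan(θ₁+θ₃−2θ₀)·cos(θ₃−θ₁). -/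
open Real

lemma sin_add_add_sin_sub (u v : ℝ) :
    Real.sin (u + v) + Real.sin (u - v) = 2 * Real.sin u * Real.cos v := by
  rw [Real.sin_add, Real.sin_sub]; ring

/-- If (θ₂−θ₁) + (θ₄−θ₃) = π/2 and cos(θ₁+θ₃−2θ₀) ≠ 0, then
sin 2(θ₄−θ₀) + sin 2(θ₂−θ₀) = sin 2(θ₃−θ₀) + sin 2(θ₁−θ₀) iff
cos(θ₄−θ₂) = tan(θ₁+θ₃−2θ₀)·cos(θ₃−θ₁). -/
theorem sin_condition_iff_tan_form (θ₀ θ₁ θ₂ θ₃ θ₄ : ℝ)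
    (hsum : (θ₂ - θ₁) + (θ₄ - θ₃) = π / 2)
    (hcos : Real.cos (θ₁ + θ₃ - 2 * θ₀) ≠ 0) :
    Real.sin (2 * (θ₄ - θ₀)) + Real.sin (2 * (θ₂ - θ₀)) =
      Real.sin (2 * (θ₃ - θ₀)) + Real.sin (2 * (θ₁ - θ₀)) ↔
    Real.cos (θ₄ - θ₂) = Real.tan (θ₁ + θ₃ - 2 * θ₀) * Real.cos (θ₃ - θ₁) := by
  set A := θ₁ + θ₃ - 2 * θ₀ with hA
  have h1 : Real.sin (2 * (θ₄ - θ₀)) + Real.sin (2 * (θ₂ - θ₀)) =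
      2 * Real.cos A * Real.cos (θ₄ - θ₂) := by
    have e1 : 2 * (θ₄ - θ₀) = (A + π / 2) + (θ₄ - θ₂) := by rw [hA]; linarith
    have e2 : 2 * (θ₂ - θ₀) = (A + π / 2) - (θ₄ - θ₂) := by rw [hA]; linarith
    rw [e1, e2, sin_add_add_sin_sub, Real.sin_add_pi_div_two]
  have h2 : Real.sin (2 * (θ₃ - θ₀)) + Real.sin (2 * (θ₁ - θ₀)) =
      2 * Real.sin A * Real.cos (θ₃ - θ₁) := by
    have e1 : 2 * (θ₃ - θ₀) = A + (θ₃ - θ₁) := by rw [hA]; ring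
    have e2 : 2 * (θ₁ - θ₀) = A - (θ₃ - θ₁) := by rw [hA]; ring
    rw [e1, e2, sin_add_add_sin_sub]
  rw [h1, h2, Real.tan_eq_sin_div_cos]
  constructor
  · intro h
    field_simp
    linarith
  · intro h
    field_simp at h
    linarith
end

section
/- In the eight-sector configuration, if θ₁ + θ₃ = 2θ₀, θ₄ = θ₂ + π/2, and (θ₂−θ₁) + (θ₄−θ₃) = π/2, then the alternative area sums are equal: S₁+S₃+S₅+S₇ = S₂+S₄+S₆+S₈ = (π/2)·a². -/
open Real

private lemma key_pair (a r₀ θ₀ α β : ℝ) (h : r₀ ^ 2 ≤ a ^ 2) :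
    (∫ θ in α..β,
        (r₀ * Real.cos (θ - θ₀) + Real.sqrt (a ^ 2 - r₀ ^ 2 * Real.sin (θ - θ₀) ^ 2)) ^ 2)
      + (∫ θ in (α + π)..(β + π),
        (r₀ * Real.cos (θ - θ₀) + Real.sqrt (a ^ 2 - r₀ ^ 2 * Real.sin (θ - θ₀) ^ 2)) ^ 2)
    = 2 * a ^ 2 * (β - α) + r₀ ^ 2 * (Real.sin (2 * (β - θ₀)) - Real.sin (2 * (α - θ₀))) := by
  set f : ℝ → ℝ := fun θ =>
    (r₀ * Real.cos (θ - θ₀) + Real.sqrt (a ^ 2 - r₀ ^ 2 * Real.sin (θ - θ₀) ^ 2)) ^ 2 with hf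
  have hcont : Continuous f := by
    apply Continuous.pow
    apply Continuous.add
    · fun_prop
    · exact Real.continuous_sqrt.comp (by fun_prop)
  have h2 : (∫ θ in (α + π)..(β + π), f θ) = ∫ θ in α..β, f (θ + π) := by
    rw [intervalIntegral.integral_comp_add_right]
  have hadd : (∫ θ in α..β, f θ) + (∫ θ in α..β, f (θ + π))
      = ∫ θ in α..β, (f θ + f (θ + π)) :=
    (intervalIntegral.integral_add (hcont.intervalIntegrable _ _)
      ((hcont.comp (continuous_id.add continuous_const)).intervalIntegrable _ _)).symm
  rw [h2, hadd]
  have hpt : ∀ θ : ℝ, f θ + f (θ + π) = 2 * a ^ 2 + 2 * r₀ ^ 2 * Real.cos (2 * (θ - θ₀)) := by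
    intro θ
    have hnn : (0:ℝ) ≤ a ^ 2 - r₀ ^ 2 * Real.sin (θ - θ₀) ^ 2 := by
      nlinarith [Real.sin_sq_le_one (θ - θ₀), sq_nonneg (Real.sin (θ - θ₀)), sq_nonneg r₀]
    have hsq : Real.sqrt (a ^ 2 - r₀ ^ 2 * Real.sin (θ - θ₀) ^ 2) ^ 2
        = a ^ 2 - r₀ ^ 2 * Real.sin (θ - θ₀) ^ 2 := Real.sq_sqrt hnn
    have he : θ + π - θ₀ = (θ - θ₀) + π := by ring
    simp only [hf, he, Real.cos_add_pi, Real.sin_add_pi, neg_sq]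
    have hcos2 : Real.cos (2 * (θ - θ₀)) = 2 * Real.cos (θ - θ₀) ^ 2 - 1 :=
      Real.cos_two_mul _
    have hsin2 : Real.sin (θ - θ₀) ^ 2 = 1 - Real.cos (θ - θ₀) ^ 2 := Real.sin_sq _
    linear_combination 2*hsq - 2*r₀^2*hsin2 - 2*r₀^2*hcos2
  rw [intervalIntegral.integral_congr (g := fun θ =>
      2 * a ^ 2 + 2 * r₀ ^ 2 * Real.cos (2 * (θ - θ₀))) (fun θ _ => hpt θ)]
  have hderiv : ∀ θ ∈ Set.uIcc α β, HasDerivAt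
      (fun θ => 2 * a ^ 2 * θ + r₀ ^ 2 * Real.sin (2 * (θ - θ₀)))
      (2 * a ^ 2 + 2 * r₀ ^ 2 * Real.cos (2 * (θ - θ₀))) θ := by
    intro θ _
    have h1 : HasDerivAt (fun θ : ℝ => 2 * (θ - θ₀)) 2 θ := by
      simpa using ((hasDerivAt_id θ).sub_const θ₀).const_mul 2
    have h2 := (Real.hasDerivAt_sin (2 * (θ - θ₀))).comp θ h1
    have h3 := h2.const_mul (r₀ ^ 2)
    have h4 : HasDerivAt (fun θ : ℝ => 2 * a ^ 2 * θ) (2 * a ^ 2) θ := by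
      simpa using (hasDerivAt_id θ).const_mul (2 * a ^ 2)
    refine (h4.add h3).congr_deriv ?_
    ring
  rw [intervalIntegral.integral_eq_sub_of_hasDerivAt hderiv
    (Continuous.intervalIntegrable (by fun_prop) _ _)]
  ring

/-- Eight-sector configuration: if θ₁ + θ₃ = 2θ₀, θ₄ = θ₂ + π/2, and
(θ₂−θ₁) + (θ₄−θ₃) = π/2, then the alternative area sums are both equal to (π/2)·a². -/
theorem eight_sector_instance (a r₀ θ₀ θ₁ θ₂ θ₃ θ₄ : ℝ)
    (ha : 0 < a) (hr₀ : 0 ≤ r₀) (hr₀a : r₀ ≤ a)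
    (h12 : θ₁ < θ₂) (h23 : θ₂ < θ₃) (h34 : θ₃ < θ₄) (h41 : θ₄ < θ₁ + π)
    (S : ℝ → ℝ → ℝ)
    (hS : ∀ α β : ℝ, α ≤ β → S α β = (1 / 2) * ∫ θ in α..β,
      (r₀ * Real.cos (θ - θ₀) + Real.sqrt (a ^ 2 - r₀ ^ 2 * Real.sin (θ - θ₀) ^ 2)) ^ 2)
    (h13 : θ₁ + θ₃ = 2 * θ₀) (h42 : θ₄ = θ₂ + π / 2)
    (hsum : (θ₂ - θ₁) + (θ₄ - θ₃) = π / 2) :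
    S θ₁ θ₂ + S θ₃ θ₄ + S (θ₁ + π) (θ₂ + π) + S (θ₃ + π) (θ₄ + π) = π / 2 * a ^ 2 ∧
    S θ₂ θ₃ + S θ₄ (θ₁ + π) + S (θ₂ + π) (θ₃ + π) + S (θ₄ + π) (θ₁ + 2 * π) =
      π / 2 * a ^ 2 := by
  have hpi : (0:ℝ) < π := Real.pi_pos
  have hsq : r₀ ^ 2 ≤ a ^ 2 := by nlinarith
  have k12 := key_pair a r₀ θ₀ θ₁ θ₂ hsq
  have k34 := key_pair a r₀ θ₀ θ₃ θ₄ hsq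
  have k23 := key_pair a r₀ θ₀ θ₂ θ₃ hsq
  have k41 := key_pair a r₀ θ₀ θ₄ (θ₁ + π) hsq
  -- trig facts from hypotheses
  have t13 : Real.sin (2 * (θ₁ - θ₀)) = - Real.sin (2 * (θ₃ - θ₀)) := by
    have : 2 * (θ₁ - θ₀) = -(2 * (θ₃ - θ₀)) := by linarith
    rw [this, Real.sin_neg]
  have t42 : Real.sin (2 * (θ₄ - θ₀)) = - Real.sin (2 * (θ₂ - θ₀)) := by
    have : 2 * (θ₄ - θ₀) = 2 * (θ₂ - θ₀) + π := by rw [h42]; ring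
    rw [this, Real.sin_add_pi]
  have t1p : Real.sin (2 * (θ₁ + π - θ₀)) = Real.sin (2 * (θ₁ - θ₀)) := by
    have : 2 * (θ₁ + π - θ₀) = 2 * (θ₁ - θ₀) + 2 * π := by ring
    rw [this, Real.sin_add_two_pi]
  constructor
  · rw [hS θ₁ θ₂ h12.le, hS θ₃ θ₄ h34.le,
      hS (θ₁ + π) (θ₂ + π) (by linarith), hS (θ₃ + π) (θ₄ + π) (by linarith)]
    linear_combination (1/2)*k12 + (1/2)*k34 + a^2*hsum + (r₀^2/2)*t42 - (r₀^2/2)*t13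
  · have e : θ₁ + 2 * π = (θ₁ + π) + π := by ring
    rw [hS θ₂ θ₃ h23.le, hS θ₄ (θ₁ + π) h41.le,
      hS (θ₂ + π) (θ₃ + π) (by linarith), hS (θ₄ + π) (θ₁ + 2 * π) (by linarith), e]
    linear_combination (1/2)*k23 + (1/2)*k41 - a^2*hsum + (r₀^2/2)*t1p - (r₀^2/2)*t42 + (r₀^2/2)*t13
end

section
/- In the four-sector configuration, the alternative area sums satisfy S₁ + S₃ = a²·(θ₂−θ₁) + r₀²·sin(θ₂−θ₁)·cos(θ₁+θ₂−2θ₀) and S₂ + S₄ = a²·(π − θ₂ + θ₁) − r₀²·sin(θ₂−θ₁)·cos(θ₁+θ₂−2θ₀). -/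
open Real

lemma four_sector_key (a r₀ θ₀ : ℝ) (hr₀ : 0 ≤ r₀) (hr₀a : r₀ ≤ a) (α β : ℝ) :
    ((∫ θ in α..β,
      (r₀ * Real.cos (θ - θ₀) + Real.sqrt (a ^ 2 - r₀ ^ 2 * Real.sin (θ - θ₀) ^ 2)) ^ 2) +
     (∫ θ in (α+π)..(β+π),
      (r₀ * Real.cos (θ - θ₀) + Real.sqrt (a ^ 2 - r₀ ^ 2 * Real.sin (θ - θ₀) ^ 2)) ^ 2)) =
      2 * a ^ 2 * (β - α) + r₀ ^ 2 * (Real.sin (2*(β - θ₀)) - Real.sin (2*(α - θ₀))) := by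
  set f : ℝ → ℝ := fun θ =>
    (r₀ * Real.cos (θ - θ₀) + Real.sqrt (a ^ 2 - r₀ ^ 2 * Real.sin (θ - θ₀) ^ 2)) ^ 2 with hf
  have hcont : Continuous f := by
    apply Continuous.pow
    apply Continuous.add
    · fun_prop
    · exact Real.continuous_sqrt.comp (by fun_prop)
  have h2 : (∫ θ in (α+π)..(β+π), f θ) = ∫ θ in α..β, f (θ + π) := by
    rw [intervalIntegral.integral_comp_add_right]
  have hpt : ∀ θ : ℝ, f θ + f (θ + π) = 2 * a ^ 2 + 2 * r₀ ^ 2 * Real.cos (2 * (θ - θ₀)) := by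
    intro θ
    have hs : Real.sin (θ + π - θ₀) = -Real.sin (θ - θ₀) := by
      rw [show θ + π - θ₀ = (θ - θ₀) + π by ring, Real.sin_add_pi]
    have hc : Real.cos (θ + π - θ₀) = -Real.cos (θ - θ₀) := by
      rw [show θ + π - θ₀ = (θ - θ₀) + π by ring, Real.cos_add_pi]
    have hX : (0:ℝ) ≤ a ^ 2 - r₀ ^ 2 * Real.sin (θ - θ₀) ^ 2 := by
      nlinarith [Real.sin_sq_le_one (θ - θ₀), sq_nonneg (Real.sin (θ - θ₀))]
    have hq : Real.sqrt (a ^ 2 - r₀ ^ 2 * Real.sin (θ - θ₀) ^ 2) ^ 2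
        = a ^ 2 - r₀ ^ 2 * Real.sin (θ - θ₀) ^ 2 := Real.sq_sqrt hX
    have hcos2 : Real.cos (2 * (θ - θ₀)) = 2 * Real.cos (θ - θ₀) ^ 2 - 1 :=
      Real.cos_two_mul _
    have hpyth : Real.sin (θ - θ₀) ^ 2 + Real.cos (θ - θ₀) ^ 2 = 1 :=
      Real.sin_sq_add_cos_sq _
    simp only [hf, hs, hc, neg_sq]
    linear_combination 2 * hq - 2 * r₀ ^ 2 * hcos2 - 2 * r₀ ^ 2 * hpyth
  have hint : IntervalIntegrable f MeasureTheory.volume α β := hcont.intervalIntegrable α β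
  have hint2 : IntervalIntegrable (fun θ => f (θ + π)) MeasureTheory.volume α β :=
    (hcont.comp (by fun_prop)).intervalIntegrable α β
  rw [h2, ← intervalIntegral.integral_add hint hint2]
  have heq : (∫ θ in α..β, (f θ + f (θ + π)))
      = ∫ θ in α..β, (2 * a ^ 2 + 2 * r₀ ^ 2 * Real.cos (2 * (θ - θ₀))) := by
    apply intervalIntegral.integral_congr
    intro θ _; exact hpt θ
  rw [heq]
  have hderiv : ∀ θ ∈ Set.uIcc α β,
      HasDerivAt (fun t => 2 * a ^ 2 * t + r₀ ^ 2 * Real.sin (2 * (t - θ₀)))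
        (2 * a ^ 2 + 2 * r₀ ^ 2 * Real.cos (2 * (θ - θ₀))) θ := by
    intro θ _
    have h1 : HasDerivAt (fun t : ℝ => 2 * (t - θ₀)) 2 θ := by
      simpa using ((hasDerivAt_id θ).sub_const θ₀).const_mul 2
    have h2 : HasDerivAt (fun t : ℝ => Real.sin (2 * (t - θ₀)))
        (Real.cos (2 * (θ - θ₀)) * 2) θ := (Real.hasDerivAt_sin _).comp θ h1
    have h3 := ((hasDerivAt_id θ).const_mul (2 * a ^ 2)).add (h2.const_mul (r₀ ^ 2))
    refine h3.congr_deriv ?_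
    ring
  rw [intervalIntegral.integral_eq_sub_of_hasDerivAt hderiv
    (by apply Continuous.intervalIntegrable; fun_prop)]
  ring

/-- Four-sector configuration: S₁ + S₃ = a²(θ₂−θ₁) + r₀²·sin(θ₂−θ₁)·cos(θ₁+θ₂−2θ₀) and
S₂ + S₄ = a²(π − θ₂ + θ₁) − r₀²·sin(θ₂−θ₁)·cos(θ₁+θ₂−2θ₀). -/
theorem four_sector_sums (a r₀ θ₀ θ₁ θ₂ : ℝ)
    (ha : 0 < a) (hr₀ : 0 ≤ r₀) (hr₀a : r₀ ≤ a)
    (h12 : θ₁ < θ₂) (h21 : θ₂ < θ₁ + π)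
    (S : ℝ → ℝ → ℝ)
    (hS : ∀ α β : ℝ, α ≤ β → S α β = (1 / 2) * ∫ θ in α..β,
      (r₀ * Real.cos (θ - θ₀) + Real.sqrt (a ^ 2 - r₀ ^ 2 * Real.sin (θ - θ₀) ^ 2)) ^ 2) :
    S θ₁ θ₂ + S (θ₁ + π) (θ₂ + π) =
      a ^ 2 * (θ₂ - θ₁) + r₀ ^ 2 * Real.sin (θ₂ - θ₁) * Real.cos (θ₁ + θ₂ - 2 * θ₀) ∧
    S θ₂ (θ₁ + π) + S (θ₂ + π) (θ₁ + 2 * π) =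
      a ^ 2 * (π - θ₂ + θ₁) - r₀ ^ 2 * Real.sin (θ₂ - θ₁) * Real.cos (θ₁ + θ₂ - 2 * θ₀) := by
  have key := four_sector_key a r₀ θ₀ hr₀ hr₀a
  have hsd : ∀ x y : ℝ, Real.sin (2*(x - θ₀)) - Real.sin (2*(y - θ₀))
      = 2 * Real.sin (x - y) * Real.cos (x + y - 2*θ₀) := by
    intro x y
    rw [Real.sin_sub_sin]
    congr 2
    · congr 1; ring
    · congr 1; ring
  constructor
  · rw [hS θ₁ θ₂ h12.le, hS (θ₁+π) (θ₂+π) (by linarith)]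
    have h := key θ₁ θ₂
    rw [hsd θ₂ θ₁, show θ₂ + θ₁ - 2*θ₀ = θ₁ + θ₂ - 2*θ₀ by ring] at h
    linear_combination h / 2
  · rw [hS θ₂ (θ₁+π) h21.le, hS (θ₂+π) (θ₁+2*π) (by linarith),
      show θ₁ + 2*π = (θ₁ + π) + π by ring]
    have h := key θ₂ (θ₁+π)
    rw [hsd (θ₁+π) θ₂, show θ₁ + π + θ₂ - 2*θ₀ = (θ₁ + θ₂ - 2*θ₀) + π by ring, Real.cos_add_pi, show θ₁ + π - θ₂ = π - (θ₂ - θ₁) by ring, Real.sin_pi_sub] at h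
    linear_combination h / 2
end

section
/- In the four-sector configuration, the alternative area sums are equal, S₁ + S₃ = S₂ + S₄, if and only if (r₀²/2)·[sin 2(θ₂−θ₀) − sin 2(θ₁−θ₀)] + a²·(θ₂ − θ₁ − π/2) = 0. In particular, when r₀ = 0 this condition reduces to θ₂ − θ₁ = π/2. -/
open Real

/-- Four-sector configuration: S₁ + S₃ = S₂ + S₄ iff
(r₀²/2)[sin 2(θ₂−θ₀) − sin 2(θ₁−θ₀)] + a²(θ₂ − θ₁ − π/2) = 0; and when r₀ = 0 this
condition reduces to θ₂ − θ₁ = π/2. -/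
theorem four_sector_equal_iff (a r₀ θ₀ θ₁ θ₂ : ℝ)
    (ha : 0 < a) (hr₀ : 0 ≤ r₀) (hr₀a : r₀ ≤ a)
    (h12 : θ₁ < θ₂) (h21 : θ₂ < θ₁ + π)
    (S : ℝ → ℝ → ℝ)
    (hS : ∀ α β : ℝ, α ≤ β → S α β = (1 / 2) * ∫ θ in α..β,
      (r₀ * Real.cos (θ - θ₀) + Real.sqrt (a ^ 2 - r₀ ^ 2 * Real.sin (θ - θ₀) ^ 2)) ^ 2) :
    (S θ₁ θ₂ + S (θ₁ + π) (θ₂ + π) = S θ₂ (θ₁ + π) + S (θ₂ + π) (θ₁ + 2 * π) ↔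
      r₀ ^ 2 / 2 * (Real.sin (2 * (θ₂ - θ₀)) - Real.sin (2 * (θ₁ - θ₀))) +
        a ^ 2 * (θ₂ - θ₁ - π / 2) = 0) ∧
    (r₀ = 0 →
      (r₀ ^ 2 / 2 * (Real.sin (2 * (θ₂ - θ₀)) - Real.sin (2 * (θ₁ - θ₀))) +
        a ^ 2 * (θ₂ - θ₁ - π / 2) = 0 ↔ θ₂ - θ₁ = π / 2)) := by
  set f : ℝ → ℝ := fun θ =>
    (r₀ * Real.cos (θ - θ₀) + Real.sqrt (a ^ 2 - r₀ ^ 2 * Real.sin (θ - θ₀) ^ 2)) ^ 2 with hf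
  have hcont : Continuous f := by
    apply Continuous.pow
    exact (continuous_const.mul (Real.continuous_cos.comp
      (continuous_id.sub continuous_const))).add
      (Real.continuous_sqrt.comp (continuous_const.sub (continuous_const.mul
        ((Real.continuous_sin.comp (continuous_id.sub continuous_const)).pow 2))))
  have key : ∀ α β : ℝ, α ≤ β → S α β + S (α + π) (β + π) =
      a ^ 2 * (β - α) + r₀ ^ 2 / 2 *
        (Real.sin (2 * (β - θ₀)) - Real.sin (2 * (α - θ₀))) := by
    intro α β hab
    rw [hS α β hab, hS (α + π) (β + π) (by linarith)]
    have h2 : (∫ θ in (α + π)..(β + π), f θ) = ∫ θ in α..β, f (θ + π) := by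
      rw [intervalIntegral.integral_comp_add_right]
    have hpt : ∀ θ : ℝ, f θ + f (θ + π) = 2 * a ^ 2 + 2 * r₀ ^ 2 * Real.cos (2 * (θ - θ₀)) := by
      intro θ
      have e1 : θ + π - θ₀ = (θ - θ₀) + π := by ring
      have hq : Real.sqrt (a ^ 2 - r₀ ^ 2 * Real.sin (θ - θ₀) ^ 2) ^ 2
          = a ^ 2 - r₀ ^ 2 * Real.sin (θ - θ₀) ^ 2 := by
        apply Real.sq_sqrt
        nlinarith [Real.sin_sq_le_one (θ - θ₀), sq_nonneg r₀, sq_nonneg (Real.sin (θ - θ₀))]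
      have hc2 : Real.cos (2 * (θ - θ₀)) =
          Real.cos (θ - θ₀) ^ 2 - Real.sin (θ - θ₀) ^ 2 := by
        rw [Real.cos_two_mul, Real.sin_sq]
        ring
      simp only [hf, e1, Real.cos_add_pi, Real.sin_add_pi, neg_sq, hc2]
      nlinarith [hq]
    have hint1 : IntervalIntegrable f MeasureTheory.volume α β := hcont.intervalIntegrable α β
    have hint2 : IntervalIntegrable (fun θ => f (θ + π)) MeasureTheory.volume α β :=
      (hcont.comp (continuous_id.add continuous_const)).intervalIntegrable α β
    have hsum : (∫ θ in α..β, f θ) + (∫ θ in α..β, f (θ + π))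
        = ∫ θ in α..β, (2 * a ^ 2 + 2 * r₀ ^ 2 * Real.cos (2 * (θ - θ₀))) := by
      rw [← intervalIntegral.integral_add hint1 hint2]
      exact intervalIntegral.integral_congr fun θ _ => hpt θ
    have hFTC : (∫ θ in α..β, (2 * a ^ 2 + 2 * r₀ ^ 2 * Real.cos (2 * (θ - θ₀))))
        = (2 * a ^ 2 * β + r₀ ^ 2 * Real.sin (2 * (β - θ₀)))
          - (2 * a ^ 2 * α + r₀ ^ 2 * Real.sin (2 * (α - θ₀))) := by
      apply intervalIntegral.integral_eq_sub_of_hasDerivAt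
      · intro θ _
        have h1 : HasDerivAt (fun θ : ℝ => 2 * (θ - θ₀)) 2 θ := by
          simpa using ((hasDerivAt_id θ).sub_const θ₀).const_mul (2 : ℝ)
        have h2 : HasDerivAt (fun θ : ℝ => Real.sin (2 * (θ - θ₀)))
            (Real.cos (2 * (θ - θ₀)) * 2) θ := (Real.hasDerivAt_sin _).comp θ h1
        have h3 : HasDerivAt (fun θ : ℝ => 2 * a ^ 2 * θ) (2 * a ^ 2) θ := by
          simpa using (hasDerivAt_id θ).const_mul (2 * a ^ 2)
        have := h3.add (h2.const_mul (r₀ ^ 2))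
        convert this using 1
        · rfl
        ring
      · apply Continuous.intervalIntegrable
        exact continuous_const.add (continuous_const.mul (Real.continuous_cos.comp
          (continuous_const.mul (continuous_id.sub continuous_const))))
    rw [h2]
    rw [show (1:ℝ)/2 * (∫ θ in α..β, f θ) + 1/2 * (∫ θ in α..β, f (θ + π))
        = 1/2 * ((∫ θ in α..β, f θ) + (∫ θ in α..β, f (θ + π))) by ring, hsum, hFTC]
    ring
  have e24 : θ₁ + 2 * π = (θ₁ + π) + π := by ring
  have k1 := key θ₁ θ₂ h12.le
  have k2 := key θ₂ (θ₁ + π) h21.le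
  rw [← e24] at k2
  have esin : Real.sin (2 * (θ₁ + π - θ₀)) = Real.sin (2 * (θ₁ - θ₀)) := by
    rw [show 2 * (θ₁ + π - θ₀) = 2 * (θ₁ - θ₀) + 2 * π by ring, Real.sin_add_two_pi]
  rw [esin] at k2
  constructor
  · constructor
    · intro h
      rw [k1, k2] at h
      linarith
    · intro h
      rw [k1, k2]
      linarith
  · intro h0
    subst h0
    have ha2 : (0:ℝ) < a ^ 2 := by positivity
    constructor
    · intro h
      have : a ^ 2 * (θ₂ - θ₁ - π / 2) = 0 := by linarith [h]
      have := (mul_eq_zero.1 this).resolve_left (by positivity)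
      linarith
    · intro h
      nlinarith
end

section
/- In the four-sector configuration, if θ₂ − θ₁ = π/2 and sin 2(θ₂−θ₀) = sin 2(θ₁−θ₀), then S₁ + S₃ = (π/2)·a² = S₂ + S₄. -/
open Real

lemma four_sector_aux (a r₀ θ₀ α β : ℝ) (hr₀ : 0 ≤ r₀) (hr₀a : r₀ ≤ a) :
    (∫ θ in α..β,
      (r₀ * Real.cos (θ - θ₀) + Real.sqrt (a ^ 2 - r₀ ^ 2 * Real.sin (θ - θ₀) ^ 2)) ^ 2)
    + (∫ θ in (α + π)..(β + π),
      (r₀ * Real.cos (θ - θ₀) + Real.sqrt (a ^ 2 - r₀ ^ 2 * Real.sin (θ - θ₀) ^ 2)) ^ 2)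
    = 2 * a ^ 2 * (β - α) + r₀ ^ 2 * (Real.sin (2 * (β - θ₀)) - Real.sin (2 * (α - θ₀))) := by
  have hcont : Continuous (fun θ : ℝ =>
      (r₀ * Real.cos (θ - θ₀) + Real.sqrt (a ^ 2 - r₀ ^ 2 * Real.sin (θ - θ₀) ^ 2)) ^ 2) := by
    fun_prop
  have h2 : (∫ θ in (α + π)..(β + π),
      (r₀ * Real.cos (θ - θ₀) + Real.sqrt (a ^ 2 - r₀ ^ 2 * Real.sin (θ - θ₀) ^ 2)) ^ 2)
      = ∫ θ in α..β,
      (r₀ * Real.cos (θ + π - θ₀) + Real.sqrt (a ^ 2 - r₀ ^ 2 * Real.sin (θ + π - θ₀) ^ 2)) ^ 2 := by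
    rw [← intervalIntegral.integral_comp_add_right (fun θ =>
      (r₀ * Real.cos (θ - θ₀) + Real.sqrt (a ^ 2 - r₀ ^ 2 * Real.sin (θ - θ₀) ^ 2)) ^ 2) π]
  rw [h2, ← intervalIntegral.integral_add (hcont.intervalIntegrable α β)
    ((by fun_prop : Continuous fun θ : ℝ =>
      (r₀ * Real.cos (θ + π - θ₀) + Real.sqrt (a ^ 2 - r₀ ^ 2 * Real.sin (θ + π - θ₀) ^ 2)) ^ 2).intervalIntegrable α β)]
  have hpt : ∀ θ : ℝ,
      (r₀ * Real.cos (θ - θ₀) + Real.sqrt (a ^ 2 - r₀ ^ 2 * Real.sin (θ - θ₀) ^ 2)) ^ 2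
      + (r₀ * Real.cos (θ + π - θ₀) + Real.sqrt (a ^ 2 - r₀ ^ 2 * Real.sin (θ + π - θ₀) ^ 2)) ^ 2
      = 2 * a ^ 2 + 2 * r₀ ^ 2 * Real.cos (2 * (θ - θ₀)) := by
    intro θ
    have he : θ + π - θ₀ = (θ - θ₀) + π := by ring
    rw [he, Real.sin_add_pi, Real.cos_add_pi, neg_sq]
    have hnn : 0 ≤ a ^ 2 - r₀ ^ 2 * Real.sin (θ - θ₀) ^ 2 := by
      nlinarith [Real.sin_sq_le_one (θ - θ₀), sq_nonneg r₀, sq_nonneg (a - r₀)]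
    have hq := Real.sq_sqrt hnn
    have hc2 := Real.cos_two_mul (θ - θ₀)
    have hsc := Real.sin_sq_add_cos_sq (θ - θ₀)
    nlinarith [hq, hc2, hsc]
  rw [intervalIntegral.integral_congr (fun θ _ => hpt θ)]
  have hderiv : ∀ θ ∈ Set.uIcc α β, HasDerivAt
      (fun θ : ℝ => 2 * a ^ 2 * θ + r₀ ^ 2 * Real.sin (2 * (θ - θ₀)))
      (2 * a ^ 2 + 2 * r₀ ^ 2 * Real.cos (2 * (θ - θ₀))) θ := by
    intro θ _
    have h1 : HasDerivAt (fun θ : ℝ => 2 * (θ - θ₀)) 2 θ := by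
      simpa using ((hasDerivAt_id θ).sub_const θ₀).const_mul 2
    have h2 := (Real.hasDerivAt_sin (2 * (θ - θ₀))).comp θ h1
    have h3 := ((hasDerivAt_id θ).const_mul (2 * a ^ 2)).add (h2.const_mul (r₀ ^ 2))
    exact h3.congr_deriv (by ring)
  rw [intervalIntegral.integral_eq_sub_of_hasDerivAt hderiv
    ((by fun_prop : Continuous fun θ : ℝ =>
      2 * a ^ 2 + 2 * r₀ ^ 2 * Real.cos (2 * (θ - θ₀))).intervalIntegrable α β)]
  ring

/-- Four-sector configuration: if θ₂ − θ₁ = π/2 and sin 2(θ₂−θ₀) = sin 2(θ₁−θ₀), then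
S₁ + S₃ = (π/2)·a² = S₂ + S₄. -/
theorem four_sector_special_case (a r₀ θ₀ θ₁ θ₂ : ℝ)
    (ha : 0 < a) (hr₀ : 0 ≤ r₀) (hr₀a : r₀ ≤ a)
    (h12 : θ₁ < θ₂) (h21 : θ₂ < θ₁ + π)
    (S : ℝ → ℝ → ℝ)
    (hS : ∀ α β : ℝ, α ≤ β → S α β = (1 / 2) * ∫ θ in α..β,
      (r₀ * Real.cos (θ - θ₀) + Real.sqrt (a ^ 2 - r₀ ^ 2 * Real.sin (θ - θ₀) ^ 2)) ^ 2)
    (hdiff : θ₂ - θ₁ = π / 2)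
    (hsin : Real.sin (2 * (θ₂ - θ₀)) = Real.sin (2 * (θ₁ - θ₀))) :
    S θ₁ θ₂ + S (θ₁ + π) (θ₂ + π) = π / 2 * a ^ 2 ∧
    S θ₂ (θ₁ + π) + S (θ₂ + π) (θ₁ + 2 * π) = π / 2 * a ^ 2 := by
  have h12' : θ₁ ≤ θ₂ := h12.le
  have h21' : θ₂ ≤ θ₁ + π := h21.le
  constructor
  · rw [hS θ₁ θ₂ h12', hS (θ₁ + π) (θ₂ + π) (by linarith)]
    have := four_sector_aux a r₀ θ₀ θ₁ θ₂ hr₀ hr₀a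
    rw [hsin] at this
    nlinarith [this]
  · have he : θ₁ + 2 * π = (θ₁ + π) + π := by ring
    rw [hS θ₂ (θ₁ + π) h21', he, hS (θ₂ + π) ((θ₁ + π) + π) (by linarith)]
    have := four_sector_aux a r₀ θ₀ θ₂ (θ₁ + π) hr₀ hr₀a
    have hs1 : Real.sin (2 * (θ₁ + π - θ₀)) = Real.sin (2 * (θ₁ - θ₀)) := by
      have : 2 * (θ₁ + π - θ₀) = 2 * (θ₁ - θ₀) + 2 * π := by ring
      rw [this, Real.sin_add_two_pi]
    rw [hs1, hsin] at this
    nlinarith [this]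
end

section
/- In the six-sector configuration with 0 < r₀ ≤ a, the alternative area sum satisfies S₁ + S₃ + S₅ = (π/2)·a² + a²·[(x₂ − x₁ − x₃) + (1/2)·(sin 2x₂ − sin 2x₁ − sin 2x₃)], where xᵢ = arcsin((r₀/a)·sin(θᵢ − θ₀)) for i = 1, 2, 3. -/
/-!
Write φ = θ - θ₀ and x = arcsin ((r₀ / a) sin φ), so that a cos x = √(a² - r₀² sin² φ).
Then r(θ)² = a² + r₀² cos 2φ + 2 a r₀ cos φ cos x, and off the countable set where
cos φ = 0 this is the derivative of F(θ) = a² θ + (r₀² / 2) sin 2φ + a² (x + sin (2x) / 2).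
As x changes sign under θ ↦ θ + π, F(θ + π) = F(θ) + π a² - 2 a² (x + sin (2x) / 2),
and the three sector areas telescope.
-/

open Real

noncomputable def chordAngle (a r₀ θ₀ θ : ℝ) : ℝ :=
  arcsin (r₀ / a * sin (θ - θ₀))

noncomputable def sectorPrimitive (a r₀ θ₀ θ : ℝ) : ℝ :=
  a ^ 2 * θ + r₀ ^ 2 / 2 * sin (2 * (θ - θ₀)) +
    a ^ 2 * (chordAngle a r₀ θ₀ θ + sin (2 * chordAngle a r₀ θ₀ θ) / 2)

theorem hasDerivAt_arcsin_add_sin_two_mul_arcsin {t : ℝ} (h₁ : -1 < t) (h₂ : t < 1) :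
    HasDerivAt (fun t => arcsin t + sin (2 * arcsin t) / 2) (2 * √(1 - t ^ 2)) t := by
  have hpos : 0 < 1 - t ^ 2 := by nlinarith
  have harcsin := hasDerivAt_arcsin h₁.ne' h₂.ne
  refine (harcsin.add ((harcsin.const_mul 2).sin.div_const 2)).congr_deriv ?_
  have hsqrt : √(1 - t ^ 2) ^ 2 = 1 - t ^ 2 := sq_sqrt hpos.le
  rw [cos_two_mul, cos_arcsin, hsqrt]
  field_simp
  linear_combination (-2) * hsqrt

theorem mul_sqrt_one_sub_div_mul_sq {a r s : ℝ} (ha : 0 < a) :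
    a * √(1 - (r / a * s) ^ 2) = √(a ^ 2 - r ^ 2 * s ^ 2) := by
  rw [show a ^ 2 - r ^ 2 * s ^ 2 = a ^ 2 * (1 - (r / a * s) ^ 2) by field_simp,
    sqrt_mul (sq_nonneg a), sqrt_sq ha.le]

theorem hasDerivAt_sectorPrimitive {a r₀ θ₀ θ : ℝ} (ha : 0 < a) (hr : r₀ ^ 2 ≤ a ^ 2)
    (hc : cos (θ - θ₀) ≠ 0) :
    HasDerivAt (sectorPrimitive a r₀ θ₀) (polarRadius a r₀ θ₀ θ ^ 2) θ := by
  set s := sin (θ - θ₀)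
  set c := cos (θ - θ₀)
  have hs : s ^ 2 < 1 := by nlinarith [sin_sq_add_cos_sq (θ - θ₀), sq_pos_of_ne_zero hc]
  have ht : |r₀ / a * s| < 1 := by
    rw [← sq_lt_one_iff_abs_lt_one, mul_pow, div_pow, div_mul_eq_mul_div,
      div_lt_one (by positivity)]
    nlinarith [mul_le_mul_of_nonneg_right hr (sq_nonneg s),
      mul_lt_mul_of_pos_left hs (pow_pos ha 2)]
  have hsin : HasDerivAt (fun θ => sin (θ - θ₀)) c θ := by
    simpa using ((hasDerivAt_id' θ).sub_const θ₀).sin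
  have hlin : HasDerivAt (fun θ => a ^ 2 * θ + r₀ ^ 2 / 2 * sin (2 * (θ - θ₀)))
      (a ^ 2 + r₀ ^ 2 * cos (2 * (θ - θ₀))) θ := by
    have := ((((hasDerivAt_id' θ).sub_const θ₀).const_mul 2).sin.const_mul (r₀ ^ 2 / 2))
    exact (((hasDerivAt_id' θ).const_mul (a ^ 2)).add this).congr_deriv (by ring)
  obtain ⟨ht₁, ht₂⟩ := abs_lt.mp ht
  have hchord :=
    (hasDerivAt_arcsin_add_sin_two_mul_arcsin ht₁ ht₂).comp θ (hsin.const_mul (r₀ / a))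
  refine (hlin.add (hchord.const_mul (a ^ 2))).congr_deriv ?_
  have hA : 0 ≤ a ^ 2 - r₀ ^ 2 * s ^ 2 := by
    nlinarith [mul_le_mul_of_nonneg_right hr (sq_nonneg s)]
  have hroot := mul_sqrt_one_sub_div_mul_sq (r := r₀) (s := s) ha
  set q := √(1 - (r₀ / a * s) ^ 2)
  have hsq : (a * q) ^ 2 = a ^ 2 - r₀ ^ 2 * s ^ 2 := by rw [hroot, sq_sqrt hA]
  have hcancel : a ^ 2 * (2 * q * (r₀ / a * c)) = 2 * r₀ * c * (a * q) := by field_simp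
  rw [polarRadius, cos_two_mul', ← hroot, hcancel]
  linear_combination (-1) * hsq

theorem continuous_sectorPrimitive (a r₀ θ₀ : ℝ) : Continuous (sectorPrimitive a r₀ θ₀) := by
  unfold sectorPrimitive chordAngle
  fun_prop

theorem integral_polarRadius_sq {a r₀ : ℝ} (θ₀ : ℝ) (ha : 0 < a) (hr : r₀ ^ 2 ≤ a ^ 2)
    (α β : ℝ) :
    ∫ θ in α..β, polarRadius a r₀ θ₀ θ ^ 2 =
      sectorPrimitive a r₀ θ₀ β - sectorPrimitive a r₀ θ₀ α := by
  refine MeasureTheory.integral_eq_of_hasDerivAt_off_countable _ _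
    (s := {θ | cos (θ - θ₀) = 0}) ?_
    (continuous_sectorPrimitive a r₀ θ₀).continuousOn
    (fun θ hθ => hasDerivAt_sectorPrimitive ha hr hθ.2) ?_
  · refine (Set.countable_range fun k : ℤ => (2 * k + 1) * π / 2 + θ₀).mono fun θ hθ => ?_
    obtain ⟨k, hk⟩ := cos_eq_zero_iff.mp hθ
    exact ⟨k, by linarith⟩
  · exact Continuous.intervalIntegrable (by unfold polarRadius; fun_prop) α β

theorem chordAngle_add_pi (a r₀ θ₀ θ : ℝ) :
    chordAngle a r₀ θ₀ (θ + π) = -chordAngle a r₀ θ₀ θ := by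
  rw [chordAngle, chordAngle, add_sub_right_comm, sin_add_pi, mul_neg, arcsin_neg]

theorem sectorPrimitive_add_pi (a r₀ θ₀ θ : ℝ) :
    sectorPrimitive a r₀ θ₀ (θ + π) = sectorPrimitive a r₀ θ₀ θ + π * a ^ 2 -
      2 * a ^ 2 * (chordAngle a r₀ θ₀ θ + sin (2 * chordAngle a r₀ θ₀ θ) / 2) := by
  have hdouble : 2 * (θ + π - θ₀) = 2 * (θ - θ₀) + 2 * π := by ring
  rw [sectorPrimitive, sectorPrimitive, chordAngle_add_pi, hdouble, sin_add_two_pi, mul_neg,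
    sin_neg]
  ring

/-- Six-sector configuration with 0 < r₀ ≤ a:
S₁ + S₃ + S₅ = (π/2)·a² + a²·[(x₂ − x₁ − x₃) + (1/2)(sin 2x₂ − sin 2x₁ − sin 2x₃)],
where xᵢ = arcsin((r₀/a)·sin(θᵢ − θ₀)). -/
theorem six_sector_odd_sum (a r₀ θ₀ θ₁ θ₂ θ₃ : ℝ)
    (ha : 0 < a) (hr₀ : 0 < r₀) (hr₀a : r₀ ≤ a)
    (h12 : θ₁ < θ₂) (h23 : θ₂ < θ₃) (h31 : θ₃ < θ₁ + π)
    (S : ℝ → ℝ → ℝ)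
    (hS : ∀ α β : ℝ, α ≤ β → S α β = (1 / 2) * ∫ θ in α..β,
      (r₀ * Real.cos (θ - θ₀) + Real.sqrt (a ^ 2 - r₀ ^ 2 * Real.sin (θ - θ₀) ^ 2)) ^ 2)
    (x₁ x₂ x₃ : ℝ)
    (hx₁ : x₁ = Real.arcsin ((r₀ / a) * Real.sin (θ₁ - θ₀)))
    (hx₂ : x₂ = Real.arcsin ((r₀ / a) * Real.sin (θ₂ - θ₀)))
    (hx₃ : x₃ = Real.arcsin ((r₀ / a) * Real.sin (θ₃ - θ₀))) :
    S θ₁ θ₂ + S θ₃ (θ₁ + π) + S (θ₂ + π) (θ₃ + π) =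
      π / 2 * a ^ 2 + a ^ 2 * ((x₂ - x₁ - x₃) +
        (1 / 2) * (Real.sin (2 * x₂) - Real.sin (2 * x₁) - Real.sin (2 * x₃))) := by
  have hr : r₀ ^ 2 ≤ a ^ 2 := pow_le_pow_left₀ hr₀.le hr₀a 2
  have hsector (α β : ℝ) (hαβ : α ≤ β) :
      S α β = (sectorPrimitive a r₀ θ₀ β - sectorPrimitive a r₀ θ₀ α) / 2 := by
    rw [hS α β hαβ, ← integral_polarRadius_sq θ₀ ha hr]
    simp only [polarRadius]
    ring
  rw [hsector θ₁ θ₂ h12.le, hsector θ₃ (θ₁ + π) h31.le,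
    hsector (θ₂ + π) (θ₃ + π) (by linarith), sectorPrimitive_add_pi, sectorPrimitive_add_pi,
    sectorPrimitive_add_pi, hx₁, hx₂, hx₃]
  unfold chordAngle
  ring
end

section
/- In the six-sector configuration with 0 < r₀ ≤ a, the two alternative area sums are equal, S₁ + S₃ + S₅ = S₂ + S₄ + S₆, if and only if (x₂ − x₁ − x₃) + (1/2)·(sin 2x₂ − sin 2x₁ − sin 2x₃) = 0, where xᵢ = arcsin((r₀/a)·sin(θᵢ − θ₀)) for i = 1, 2, 3. -/
open Real MeasureTheory Set intervalIntegral

noncomputable def sixF (a r₀ θ₀ θ : ℝ) : ℝ :=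
  a ^ 2 * (θ - θ₀) + r₀ ^ 2 / 2 * Real.sin (2 * (θ - θ₀)) +
    (r₀ * Real.sin (θ - θ₀) * Real.sqrt (a ^ 2 - r₀ ^ 2 * Real.sin (θ - θ₀) ^ 2) +
    a ^ 2 * Real.arcsin (r₀ / a * Real.sin (θ - θ₀)))

noncomputable def sixG (a r₀ θ₀ θ : ℝ) : ℝ :=
  r₀ * Real.sin (θ - θ₀) * Real.sqrt (a ^ 2 - r₀ ^ 2 * Real.sin (θ - θ₀) ^ 2) +
    a ^ 2 * Real.arcsin (r₀ / a * Real.sin (θ - θ₀))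

lemma sixF_hasDerivAt (a r₀ θ₀ θ : ℝ) (ha : 0 < a) (hr₀ : 0 < r₀) (hr₀a : r₀ ≤ a)
    (hc : Real.cos (θ - θ₀) ≠ 0) :
    HasDerivAt (sixF a r₀ θ₀)
      ((r₀ * Real.cos (θ - θ₀) + Real.sqrt (a ^ 2 - r₀ ^ 2 * Real.sin (θ - θ₀) ^ 2)) ^ 2) θ := by
  set u := θ - θ₀ with hu
  have hs1 : Real.sin u ^ 2 < 1 := by
    have h := Real.sin_sq_add_cos_sq u
    have : 0 < Real.cos u ^ 2 := by positivity
    nlinarith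
  have hX0 : 0 < a ^ 2 - r₀ ^ 2 * Real.sin u ^ 2 := by
    have hra : r₀ ^ 2 ≤ a ^ 2 := by nlinarith
    have h2a : r₀ ^ 2 * Real.sin u ^ 2 ≤ a ^ 2 * Real.sin u ^ 2 :=
      mul_le_mul_of_nonneg_right hra (sq_nonneg (Real.sin u))
    have h2b : a ^ 2 * Real.sin u ^ 2 < a ^ 2 * 1 := by
      have := mul_pos ha ha
      nlinarith
    nlinarith
  have hy1 : (r₀ / a * Real.sin u) ^ 2 < 1 := by
    rw [mul_pow, div_pow, div_mul_eq_mul_div, div_lt_one (by positivity)]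
    nlinarith
  have hw : Real.sqrt (a ^ 2 - r₀ ^ 2 * Real.sin u ^ 2) ^ 2 = a ^ 2 - r₀ ^ 2 * Real.sin u ^ 2 :=
    Real.sq_sqrt hX0.le
  have hwpos : 0 < Real.sqrt (a ^ 2 - r₀ ^ 2 * Real.sin u ^ 2) := Real.sqrt_pos.2 hX0
  have hder : HasDerivAt (fun θ : ℝ => θ - θ₀) 1 θ := (hasDerivAt_id θ).sub_const θ₀
  have hsin : HasDerivAt (fun θ : ℝ => Real.sin (θ - θ₀)) (Real.cos u * 1) θ := hder.sin
  have h1 : HasDerivAt (fun θ : ℝ => a ^ 2 * (θ - θ₀)) (a ^ 2 * 1) θ := hder.const_mul _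
  have h2 : HasDerivAt (fun θ : ℝ => r₀ ^ 2 / 2 * Real.sin (2 * (θ - θ₀)))
      (r₀ ^ 2 / 2 * (Real.cos (2 * u) * (2 * 1))) θ := ((hder.const_mul 2).sin).const_mul _
  have hX : HasDerivAt (fun θ : ℝ => a ^ 2 - r₀ ^ 2 * Real.sin (θ - θ₀) ^ 2)
      (-(r₀ ^ 2 * ((2 : ℕ) * Real.sin u ^ 1 * (Real.cos u * 1)))) θ :=
    ((hsin.pow 2).const_mul (r₀ ^ 2)).const_sub (a ^ 2)
  have hsqrt : HasDerivAt (fun θ : ℝ => Real.sqrt (a ^ 2 - r₀ ^ 2 * Real.sin (θ - θ₀) ^ 2))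
      (-(r₀ ^ 2 * ((2 : ℕ) * Real.sin u ^ 1 * (Real.cos u * 1))) /
        (2 * Real.sqrt (a ^ 2 - r₀ ^ 2 * Real.sin u ^ 2))) θ := hX.sqrt hX0.ne'
  have h3 : HasDerivAt (fun θ : ℝ => r₀ * Real.sin (θ - θ₀) *
      Real.sqrt (a ^ 2 - r₀ ^ 2 * Real.sin (θ - θ₀) ^ 2))
      (r₀ * (Real.cos u * 1) * Real.sqrt (a ^ 2 - r₀ ^ 2 * Real.sin u ^ 2) +
        r₀ * Real.sin u *
          (-(r₀ ^ 2 * ((2 : ℕ) * Real.sin u ^ 1 * (Real.cos u * 1))) /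
            (2 * Real.sqrt (a ^ 2 - r₀ ^ 2 * Real.sin u ^ 2)))) θ :=
    (hsin.const_mul r₀).mul hsqrt
  have hy : HasDerivAt (fun θ : ℝ => r₀ / a * Real.sin (θ - θ₀)) (r₀ / a * (Real.cos u * 1)) θ :=
    hsin.const_mul _
  have hne1 : r₀ / a * Real.sin u ≠ -1 := by
    intro h; rw [h] at hy1; norm_num at hy1
  have hne1' : r₀ / a * Real.sin u ≠ 1 := by
    intro h; rw [h] at hy1; norm_num at hy1
  have harc : HasDerivAt (fun θ : ℝ => Real.arcsin (r₀ / a * Real.sin (θ - θ₀)))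
      (1 / Real.sqrt (1 - (r₀ / a * Real.sin u) ^ 2) * (r₀ / a * (Real.cos u * 1))) θ :=
    (Real.hasDerivAt_arcsin hne1 hne1').comp (h := fun θ : ℝ => r₀ / a * Real.sin (θ - θ₀)) θ hy
  have h4 := harc.const_mul (a ^ 2)
  have hsum := (h1.add h2).add (h3.add h4)
  refine hsum.congr_deriv (Eq.symm ?_)
  have hroot : Real.sqrt (1 - (r₀ / a * Real.sin u) ^ 2) =
      Real.sqrt (a ^ 2 - r₀ ^ 2 * Real.sin u ^ 2) / a := by
    have h : 1 - (r₀ / a * Real.sin u) ^ 2 = (a ^ 2 - r₀ ^ 2 * Real.sin u ^ 2) / a ^ 2 := by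
      field_simp
    rw [h, Real.sqrt_div hX0.le, Real.sqrt_sq ha.le]
  rw [hroot, Real.cos_two_mul]
  have hpyth := Real.sin_sq_add_cos_sq u
  field_simp
  linear_combination (4 * a * Real.sqrt (a ^ 2 - r₀ ^ 2 * Real.sin u ^ 2) *
      (Real.sqrt (a ^ 2 - r₀ ^ 2 * Real.sin u ^ 2) + r₀ * Real.cos u)) * hw -
    4 * a * r₀ ^ 2 * Real.sqrt (a ^ 2 - r₀ ^ 2 * Real.sin u ^ 2) ^ 2 * hpyth +
    ((2 - 4 * r₀ * Real.cos u * a) * Real.sqrt (a ^ 2 - r₀ ^ 2 * Real.sin u ^ 2) + (2 * r₀ * Real.cos u + 4 * r₀ ^ 2 * Real.cos u ^ 2 * a - 4 * r₀ ^ 2 * a + 4 * a ^ 3) -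
      4 * a * (Real.sqrt (a ^ 2 - r₀ ^ 2 * Real.sin u ^ 2) ^ 2 + (a ^ 2 - r₀ ^ 2 * Real.sin u ^ 2))) * hw +
    (-2 * r₀ ^ 2 * Real.sqrt (a ^ 2 - r₀ ^ 2 * Real.sin u ^ 2) + 4 * a * (a ^ 2 - r₀ ^ 2 * Real.sin u ^ 2) * r₀ ^ 2) * hpyth

lemma sixF_continuous (a r₀ θ₀ : ℝ) : Continuous (sixF a r₀ θ₀) := by
  unfold sixF
  have harcsin : Continuous Real.arcsin := Real.continuous_arcsin
  fun_prop

lemma six_bad_countable (θ₀ : ℝ) : Set.Countable {θ : ℝ | Real.cos (θ - θ₀) = 0} := by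
  have h : {θ : ℝ | Real.cos (θ - θ₀) = 0} ⊆
      Set.range (fun n : ℤ => (2 * n + 1) * π / 2 + θ₀) := by
    intro θ hθ
    rcases Real.cos_eq_zero_iff.mp hθ with ⟨n, hn⟩
    exact ⟨n, by linarith⟩
  exact Set.Countable.mono h (Set.countable_range _)

lemma sixF_integral (a r₀ θ₀ : ℝ) (ha : 0 < a) (hr₀ : 0 < r₀) (hr₀a : r₀ ≤ a)
    {α β : ℝ} (hab : α ≤ β) :
    ∫ θ in α..β, (r₀ * Real.cos (θ - θ₀) + Real.sqrt (a ^ 2 - r₀ ^ 2 * Real.sin (θ - θ₀) ^ 2)) ^ 2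
      = sixF a r₀ θ₀ β - sixF a r₀ θ₀ α := by
  apply MeasureTheory.integral_eq_of_hasDerivAt_off_countable_of_le _ _ hab
    (six_bad_countable θ₀) ((sixF_continuous a r₀ θ₀).continuousOn)
  · intro x hx
    exact sixF_hasDerivAt a r₀ θ₀ x ha hr₀ hr₀a hx.2
  · apply Continuous.intervalIntegrable
    fun_prop

lemma sixF_pi (a r₀ θ₀ θ : ℝ) :
    sixF a r₀ θ₀ (θ + π) = sixF a r₀ θ₀ θ + a ^ 2 * π - 2 * sixG a r₀ θ₀ θ := by
  unfold sixF sixG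
  have h1 : θ + π - θ₀ = (θ - θ₀) + π := by ring
  have h2 : 2 * ((θ - θ₀) + π) = 2 * (θ - θ₀) + 2 * π := by ring
  rw [h1, h2, Real.sin_add_two_pi, Real.sin_add_pi]
  simp only [mul_neg, Real.arcsin_neg, neg_sq]
  ring

lemma sixF_two_pi (a r₀ θ₀ θ : ℝ) :
    sixF a r₀ θ₀ (θ + 2 * π) = sixF a r₀ θ₀ θ + a ^ 2 * (2 * π) := by
  unfold sixF
  have h1 : θ + 2 * π - θ₀ = (θ - θ₀) + 2 * π := by ring
  have h2 : 2 * ((θ - θ₀) + 2 * π) = (2 * (θ - θ₀) + 2 * π) + 2 * π := by ring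
  rw [h1, h2, Real.sin_add_two_pi, Real.sin_add_two_pi, Real.sin_add_two_pi]
  ring

lemma sixG_val (a r₀ θ₀ θ : ℝ) (ha : 0 < a) (hr₀ : 0 < r₀) (hr₀a : r₀ ≤ a) :
    sixG a r₀ θ₀ θ = a ^ 2 * (Real.arcsin (r₀ / a * Real.sin (θ - θ₀)) +
      (1 / 2) * Real.sin (2 * Real.arcsin (r₀ / a * Real.sin (θ - θ₀)))) := by
  unfold sixG
  set y := r₀ / a * Real.sin (θ - θ₀) with hy
  have hya : |y| ≤ 1 := by
    rw [hy, abs_mul]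
    have h1 : |r₀ / a| ≤ 1 := by
      rw [abs_div, abs_of_pos hr₀, abs_of_pos ha, div_le_one ha]
      exact hr₀a
    calc |r₀ / a| * |Real.sin (θ - θ₀)| ≤ 1 * 1 :=
          mul_le_mul h1 (Real.abs_sin_le_one _) (abs_nonneg _) zero_le_one
      _ = 1 := by ring
  rw [abs_le] at hya
  have hsin : Real.sin (Real.arcsin y) = y := Real.sin_arcsin hya.1 hya.2
  have hcos : Real.cos (Real.arcsin y) = Real.sqrt (1 - y ^ 2) := Real.cos_arcsin y
  have hroot : Real.sqrt (a ^ 2 - r₀ ^ 2 * Real.sin (θ - θ₀) ^ 2) = a * Real.sqrt (1 - y ^ 2) := by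
    have h : a ^ 2 - r₀ ^ 2 * Real.sin (θ - θ₀) ^ 2 = a ^ 2 * (1 - y ^ 2) := by
      rw [hy]; field_simp
    rw [h, Real.sqrt_mul (sq_nonneg a), Real.sqrt_sq ha.le]
  have hrs : r₀ * Real.sin (θ - θ₀) = a * y := by
    rw [hy]; field_simp
  rw [Real.sin_two_mul, hsin, hcos, hroot, hrs]
  ring
/-- Six-sector configuration with 0 < r₀ ≤ a: S₁ + S₃ + S₅ = S₂ + S₄ + S₆ iff
(x₂ − x₁ − x₃) + (1/2)(sin 2x₂ − sin 2x₁ − sin 2x₃) = 0,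
where xᵢ = arcsin((r₀/a)·sin(θᵢ − θ₀)). -/
theorem six_sector_equal_iff (a r₀ θ₀ θ₁ θ₂ θ₃ : ℝ)
    (ha : 0 < a) (hr₀ : 0 < r₀) (hr₀a : r₀ ≤ a)
    (h12 : θ₁ < θ₂) (h23 : θ₂ < θ₃) (h31 : θ₃ < θ₁ + π)
    (S : ℝ → ℝ → ℝ)
    (hS : ∀ α β : ℝ, α ≤ β → S α β = (1 / 2) * ∫ θ in α..β,
      (r₀ * Real.cos (θ - θ₀) + Real.sqrt (a ^ 2 - r₀ ^ 2 * Real.sin (θ - θ₀) ^ 2)) ^ 2)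
    (x₁ x₂ x₃ : ℝ)
    (hx₁ : x₁ = Real.arcsin ((r₀ / a) * Real.sin (θ₁ - θ₀)))
    (hx₂ : x₂ = Real.arcsin ((r₀ / a) * Real.sin (θ₂ - θ₀)))
    (hx₃ : x₃ = Real.arcsin ((r₀ / a) * Real.sin (θ₃ - θ₀))) :
    S θ₁ θ₂ + S θ₃ (θ₁ + π) + S (θ₂ + π) (θ₃ + π) =
      S θ₂ θ₃ + S (θ₁ + π) (θ₂ + π) + S (θ₃ + π) (θ₁ + 2 * π) ↔
    (x₂ - x₁ - x₃) +
      (1 / 2) * (Real.sin (2 * x₂) - Real.sin (2 * x₁) - Real.sin (2 * x₃)) = 0 := by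
  set F := sixF a r₀ θ₀ with hF
  set G := sixG a r₀ θ₀ with hG
  have key : ∀ α β : ℝ, α ≤ β → S α β = (1 / 2) * (F β - F α) := by
    intro α β hab
    rw [hS α β hab, sixF_integral a r₀ θ₀ ha hr₀ hr₀a hab]
  have e1 : S θ₁ θ₂ = (1 / 2) * (F θ₂ - F θ₁) := key _ _ h12.le
  have e2 : S θ₃ (θ₁ + π) = (1 / 2) * (F (θ₁ + π) - F θ₃) := key _ _ h31.le
  have e3 : S (θ₂ + π) (θ₃ + π) = (1 / 2) * (F (θ₃ + π) - F (θ₂ + π)) :=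
    key _ _ (by linarith)
  have e4 : S θ₂ θ₃ = (1 / 2) * (F θ₃ - F θ₂) := key _ _ h23.le
  have e5 : S (θ₁ + π) (θ₂ + π) = (1 / 2) * (F (θ₂ + π) - F (θ₁ + π)) :=
    key _ _ (by linarith)
  have e6 : S (θ₃ + π) (θ₁ + 2 * π) = (1 / 2) * (F (θ₁ + 2 * π) - F (θ₃ + π)) :=
    key _ _ (by linarith)
  have p1 : F (θ₁ + π) = F θ₁ + a ^ 2 * π - 2 * G θ₁ := sixF_pi a r₀ θ₀ θ₁
  have p2 : F (θ₂ + π) = F θ₂ + a ^ 2 * π - 2 * G θ₂ := sixF_pi a r₀ θ₀ θ₂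
  have p3 : F (θ₃ + π) = F θ₃ + a ^ 2 * π - 2 * G θ₃ := sixF_pi a r₀ θ₀ θ₃
  have p4 : F (θ₁ + 2 * π) = F θ₁ + a ^ 2 * (2 * π) := sixF_two_pi a r₀ θ₀ θ₁
  have g1 : G θ₁ = a ^ 2 * (x₁ + (1 / 2) * Real.sin (2 * x₁)) := by
    rw [hx₁]; exact sixG_val a r₀ θ₀ θ₁ ha hr₀ hr₀a
  have g2 : G θ₂ = a ^ 2 * (x₂ + (1 / 2) * Real.sin (2 * x₂)) := by
    rw [hx₂]; exact sixG_val a r₀ θ₀ θ₂ ha hr₀ hr₀a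
  have g3 : G θ₃ = a ^ 2 * (x₃ + (1 / 2) * Real.sin (2 * x₃)) := by
    rw [hx₃]; exact sixG_val a r₀ θ₀ θ₃ ha hr₀ hr₀a
  have hdiff : S θ₁ θ₂ + S θ₃ (θ₁ + π) + S (θ₂ + π) (θ₃ + π) -
      (S θ₂ θ₃ + S (θ₁ + π) (θ₂ + π) + S (θ₃ + π) (θ₁ + 2 * π)) =
      2 * a ^ 2 * ((x₂ - x₁ - x₃) +
        (1 / 2) * (Real.sin (2 * x₂) - Real.sin (2 * x₁) - Real.sin (2 * x₃))) := by
    rw [e1, e2, e3, e4, e5, e6, p1, p2, p3, p4, g1, g2, g3]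
    ring
  constructor
  · intro h
    have h0 : 2 * a ^ 2 * ((x₂ - x₁ - x₃) +
        (1 / 2) * (Real.sin (2 * x₂) - Real.sin (2 * x₁) - Real.sin (2 * x₃))) = 0 := by
      rw [← hdiff]; linarith
    have ha2 : (2 : ℝ) * a ^ 2 ≠ 0 := by positivity
    exact (mul_eq_zero.mp h0).resolve_left ha2
  · intro h
    have := hdiff
    rw [h, mul_zero] at this
    linarith
end
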